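/- arXiv:2207.11273 — 6 statements merged into one kernel-verified Lean document; each statement's English description precedes it below -/
import Mathlib

section
/- Let n ≥ 2 and let w be a word of length n such that each letter occurs at most n/4 times in w. Then f(w) = n + 2. -/
/-!
Filling every row with `w` puts `w` in all `n` rows and both diagonals, and in no column, since a
column of that grid is constant while no letter fills all of `w`. Conversely, if some column
contains `w`, every row containing `w` meets that column in `w j` or `w (rev j)`, and these two
letters occupy at most `n/2` positions of the column; so at most `n/2` rows contain `w`, and
symmetrically for columns. Either way rows and columns together contribute at most `n`.
-/

namespace WordGrid

variable {α : Type*}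

/-- The `i`-th row of the grid `G` contains the word `w` (forwards or backwards). -/
def rowC {n : ℕ} (w : Fin n → α) (G : Fin n → Fin n → α) (i : Fin n) : Prop :=
  (∀ j, G i j = w j) ∨ (∀ j, G i j = w j.rev)

/-- The `i`-th column of the grid `G` contains the word `w` (forwards or backwards). -/
def colC {n : ℕ} (w : Fin n → α) (G : Fin n → Fin n → α) (i : Fin n) : Prop :=
  (∀ j, G j i = w j) ∨ (∀ j, G j i = w j.rev)

/-- The main diagonal of the grid `G` contains the word `w`. -/
def diagC {n : ℕ} (w : Fin n → α) (G : Fin n → Fin n → α) : Prop :=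
  (∀ j, G j j = w j) ∨ (∀ j, G j j = w j.rev)

/-- The anti-diagonal of the grid `G` contains the word `w`. -/
def adiagC {n : ℕ} (w : Fin n → α) (G : Fin n → Fin n → α) : Prop :=
  (∀ j, G j j.rev = w j) ∨ (∀ j, G j j.rev = w j.rev)

open Classical in
/-- `f(w,G)`: the number of rows, columns and diagonals of `G` containing `w`. -/
noncomputable def count {n : ℕ} (w : Fin n → α) (G : Fin n → Fin n → α) : ℕ :=
  {i | rowC w G i}.ncard + {i | colC w G i}.ncard
    + (if diagC w G then 1 else 0) + (if adiagC w G then 1 else 0)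

/-- `f(w)`: the maximum of `f(w,G)` over all `n`-grids `G`. -/
noncomputable def fword {n : ℕ} (w : Fin n → α) : ℕ :=
  sSup {m | ∃ G : Fin n → Fin n → α, count w G = m}

theorem two_mul_ncard_preimage_pair_le {ι β : Type*} {w : ι → β} {N : ℕ}
    (h : ∀ a : β, 4 * {i | w i = a}.ncard ≤ N) (a b : β) : 2 * (w ⁻¹' {a, b}).ncard ≤ N := by
  have hab : (w ⁻¹' {a, b}).ncard ≤ {i | w i = a}.ncard + {i | w i = b}.ncard :=
    Set.ncard_union_le _ _
  have := h a
  have := h b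
  omega

theorem ncard_preimage_rev {n : ℕ} (s : Set (Fin n)) : (Fin.rev ⁻¹' s).ncard = s.ncard :=
  Set.ncard_preimage_of_injective_subset_range Fin.rev_injective
    (Fin.rev_surjective.range_eq ▸ Set.subset_univ s)

variable {n : ℕ} {w : Fin n → α} {G : Fin n → Fin n → α}

theorem rowC.apply_mem_pair {i : Fin n} (hi : rowC w G i) (j : Fin n) :
    G i j ∈ ({w j, w j.rev} : Set α) := by
  rcases hi with hi | hi
  · exact .inl (hi j)
  · exact .inr (hi j)

theorem two_mul_ncard_rowC_le (h : ∀ a : α, 4 * {i | w i = a}.ncard ≤ n) {j : Fin n}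
    (hj : colC w G j) : 2 * {i | rowC w G i}.ncard ≤ n := by
  have hpair := two_mul_ncard_preimage_pair_le h (w j) (w j.rev)
  rcases hj with hj | hj
  · have hsub : {i | rowC w G i} ⊆ w ⁻¹' {w j, w j.rev} := fun i hi =>
      Set.mem_preimage.2 (hj i ▸ hi.apply_mem_pair j)
    have := Set.ncard_le_ncard hsub
    omega
  · have hsub : {i | rowC w G i} ⊆ Fin.rev ⁻¹' (w ⁻¹' {w j, w j.rev}) := fun i hi =>
      Set.mem_preimage.2 (Set.mem_preimage.2 (hj i ▸ hi.apply_mem_pair j))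
    have := Set.ncard_le_ncard hsub
    rw [ncard_preimage_rev] at this
    omega

theorem two_mul_ncard_colC_le (h : ∀ a : α, 4 * {i | w i = a}.ncard ≤ n) {i : Fin n}
    (hi : rowC w G i) : 2 * {j | colC w G j}.ncard ≤ n :=
  two_mul_ncard_rowC_le (G := Function.swap G) h hi

theorem ncard_rowC_add_ncard_colC_le (h : ∀ a : α, 4 * {i | w i = a}.ncard ≤ n)
    (G : Fin n → Fin n → α) : {i | rowC w G i}.ncard + {j | colC w G j}.ncard ≤ n := by
  have hrows := Set.ncard_le_card {i | rowC w G i}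
  have hcols := Set.ncard_le_card {j | colC w G j}
  rw [Nat.card_fin] at hrows hcols
  rcases Set.eq_empty_or_nonempty {j | colC w G j} with hC | ⟨j, hj⟩
  · rw [hC, Set.ncard_empty]
    omega
  rcases Set.eq_empty_or_nonempty {i | rowC w G i} with hR | ⟨i, hi⟩
  · rw [hR, Set.ncard_empty]
    omega
  have := two_mul_ncard_rowC_le h hj
  have := two_mul_ncard_colC_le h hi
  omega

theorem count_le (h : ∀ a : α, 4 * {i | w i = a}.ncard ≤ n) (G : Fin n → Fin n → α) :
    count w G ≤ n + 2 := by
  have := ncard_rowC_add_ncard_colC_le h G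
  unfold count
  split <;> split <;> omega

theorem exists_ne_of_four_mul_ncard_le (h : ∀ a : α, 4 * {i | w i = a}.ncard ≤ n) [NeZero n]
    (a : α) : ∃ i, w i ≠ a := by
  by_contra! hw
  have hall : {i | w i = a} = Set.univ := Set.eq_univ_of_forall hw
  have := h a
  rw [hall, Set.ncard_univ, Nat.card_fin] at this
  have := NeZero.ne n
  omega

theorem count_const_rows (h : ∀ a : α, 4 * {i | w i = a}.ncard ≤ n) :
    count w (fun _ => w) = n + 2 := by
  have hrows : {i | rowC w (fun _ => w) i} = Set.univ :=
    Set.eq_univ_of_forall fun _ => .inl fun _ => rfl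
  have hcols : {j | colC w (fun _ => w) j} = ∅ := by
    refine Set.eq_empty_of_forall_notMem fun j hj => ?_
    have : NeZero n := ⟨j.pos.ne'⟩
    obtain ⟨i, hi⟩ := exists_ne_of_four_mul_ncard_le h (w j)
    rcases hj with hj | hj
    · exact hi (hj i).symm
    · exact hi (by simpa using (hj i.rev).symm)
  have hdiag : diagC w (fun _ => w) := .inl fun _ => rfl
  have hadiag : adiagC w (fun _ => w) := .inr fun _ => rfl
  rw [count, hrows, hcols, if_pos hdiag, if_pos hadiag, Set.ncard_empty, Set.ncard_univ, Nat.card_fin]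

theorem few_letters_general {n : ℕ} (w : Fin n → α)
    (h : ∀ a : α, 4 * {i | w i = a}.ncard ≤ n) :
    fword w = n + 2 :=
  IsGreatest.csSup_eq ⟨⟨_, count_const_rows h⟩, by rintro _ ⟨G, rfl⟩; exact count_le h G⟩

theorem few_letters {n : ℕ} (hn : 2 ≤ n) (w : Fin n → α)
    (h : ∀ a : α, 4 * {i | w i = a}.ncard ≤ n) :
    fword w = n + 2 :=
  few_letters_general w h

end WordGrid
end

section
/- Let n ≥ 2 and let w be a word of length n using exactly two letters such that w_i ≠ w_{n-i+1} for all i. Then f(w) = 2n. -/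
/-!
A line containing `w` shows, at any two mirror-image cells `j` and `rev j`, the two letters
`w j ≠ w (rev j)` in some order. If the main diagonal contains `w`, then row `i` and column
`rev i` cannot both contain `w`: the cells `(i, i)`, `(i, rev i)`, `(rev i, rev i)` would carry
three pairwise distinct letters from `{w i, w (rev i)}`. The same holds for the anti-diagonal with
row `i` and column `i`. So a grid with a diagonal containing `w` has at most `n + 2 ≤ 2n` good
lines, and one without has at most `2n`.

Conversely, with letters `A` and `M`, the symmetric grid `G i j = if w i = w j then A else M` has
row `i` equal to `w` or its reverse, hence the same for every column, while its diagonal is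
constantly `A` and its anti-diagonal constantly `M`.
-/

namespace WordGrid

variable {α : Type*}

-- `rowC`, `colC`, `diagC` and `adiagC` all unfold to `LineContains` of the corresponding line.
def LineContains {n : ℕ} (w ℓ : Fin n → α) : Prop :=
  (∀ j, ℓ j = w j) ∨ (∀ j, ℓ j = w j.rev)

section LineContains

variable {n : ℕ} {w ℓ : Fin n → α}

lemma LineContains.sym2_eq (h : LineContains w ℓ) (j : Fin n) :
    s(ℓ j, ℓ j.rev) = s(w j, w j.rev) := by
  rcases h with h | h
  · simp [h]
  · simp [h, Sym2.eq_swap]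

lemma LineContains.apply_ne_apply_rev (hanti : ∀ i, w i ≠ w i.rev) (h : LineContains w ℓ)
    (j : Fin n) : ℓ j ≠ ℓ j.rev := by
  have := h.sym2_eq j
  rw [Sym2.eq_iff] at this
  rcases this with ⟨h₁, h₂⟩ | ⟨h₁, h₂⟩ <;> rw [h₁, h₂]
  exacts [hanti j, (hanti j).symm]

lemma not_lineContains_of_forall_eq (hn : 0 < n) (hanti : ∀ i, w i ≠ w i.rev) {c : α}
    (hℓ : ∀ j, ℓ j = c) : ¬ LineContains w ℓ :=
  fun h => h.apply_ne_apply_rev hanti ⟨0, hn⟩ (by rw [hℓ, hℓ])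

end LineContains

lemma false_of_sym2_eq_of_sym2_eq_of_sym2_eq {a b x y z : α} (hab : a ≠ b)
    (hxy : s(x, y) = s(a, b)) (hyz : s(y, z) = s(a, b)) (hxz : s(x, z) = s(a, b)) : False := by
  simp only [Sym2.eq_iff] at hxy hyz hxz
  grind

lemma colC_iff_rowC_of_symm {n : ℕ} {w : Fin n → α} {G : Fin n → Fin n → α}
    (hG : ∀ i j, G i j = G j i) (i : Fin n) : colC w G i ↔ rowC w G i := by
  simp only [colC, rowC, hG i]

lemma ncard_add_ncard_le_of_disjoint {β : Type*} [Finite β] {s t : Set β} (h : Disjoint s t) :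
    s.ncard + t.ncard ≤ Nat.card β :=
  Set.ncard_union_eq h ▸ Set.ncard_le_card _

section UpperBound

variable {n : ℕ} {w : Fin n → α} {G : Fin n → Fin n → α}

lemma not_rowC_and_colC_rev_of_diagC (hanti : ∀ i, w i ≠ w i.rev) (hd : diagC w G)
    (i : Fin n) : ¬ (rowC w G i ∧ colC w G i.rev) := by
  rintro ⟨hr, hc⟩
  have hd' : LineContains w (fun j => G j j) := hd
  refine false_of_sym2_eq_of_sym2_eq_of_sym2_eq (hanti i) (x := G i i) (y := G i i.rev)
    (z := G i.rev i.rev) ?_ ?_ ?_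
  · exact LineContains.sym2_eq (ℓ := G i) hr i
  · exact LineContains.sym2_eq (ℓ := fun j => G j i.rev) hc i
  · exact hd'.sym2_eq i

lemma not_rowC_and_colC_of_adiagC (hanti : ∀ i, w i ≠ w i.rev) (ha : adiagC w G)
    (i : Fin n) : ¬ (rowC w G i ∧ colC w G i) := by
  rintro ⟨hr, hc⟩
  have ha' : LineContains w (fun j => G j j.rev) := ha
  refine false_of_sym2_eq_of_sym2_eq_of_sym2_eq (hanti i) (x := G i i) (y := G i i.rev)
    (z := G i.rev i) ?_ ?_ ?_
  · exact LineContains.sym2_eq (ℓ := G i) hr i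
  · simpa using ha'.sym2_eq i
  · exact LineContains.sym2_eq (ℓ := fun j => G j i) hc i

lemma ncard_rowC_add_ncard_colC_le_of_diagC (hanti : ∀ i, w i ≠ w i.rev) (hd : diagC w G) :
    {i | rowC w G i}.ncard + {i | colC w G i}.ncard ≤ n := by
  have hdisj : Disjoint {i | rowC w G i} (Fin.rev '' {i | colC w G i}) := by
    rw [Set.disjoint_left]
    rintro _ hr ⟨i, hc, rfl⟩
    exact not_rowC_and_colC_rev_of_diagC hanti hd i.rev ⟨hr, by rwa [Fin.rev_rev]⟩
  have := ncard_add_ncard_le_of_disjoint hdisj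
  rwa [Set.ncard_image_of_injective _ Fin.rev_injective, Nat.card_fin] at this

lemma ncard_rowC_add_ncard_colC_le_of_adiagC (hanti : ∀ i, w i ≠ w i.rev) (ha : adiagC w G) :
    {i | rowC w G i}.ncard + {i | colC w G i}.ncard ≤ n := by
  have hdisj : Disjoint {i | rowC w G i} {i | colC w G i} :=
    Set.disjoint_left.2 fun i hr hc => not_rowC_and_colC_of_adiagC hanti ha i ⟨hr, hc⟩
  simpa using ncard_add_ncard_le_of_disjoint hdisj

lemma count_le_two_mul (hn : 2 ≤ n) (hanti : ∀ i, w i ≠ w i.rev) : count w G ≤ 2 * n := by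
  have hR : {i | rowC w G i}.ncard ≤ n := by simpa using Set.ncard_le_card {i | rowC w G i}
  have hC : {i | colC w G i}.ncard ≤ n := by simpa using Set.ncard_le_card {i | colC w G i}
  by_cases h : diagC w G ∨ adiagC w G
  · have hRC : {i | rowC w G i}.ncard + {i | colC w G i}.ncard ≤ n := h.elim
      (ncard_rowC_add_ncard_colC_le_of_diagC hanti) (ncard_rowC_add_ncard_colC_le_of_adiagC hanti)
    unfold count
    split_ifs <;> omega
  · rw [not_or] at h
    simp only [count, h, if_false]
    omega

end UpperBound

section LowerBound

variable [DecidableEq α] {n : ℕ} {w : Fin n → α} {A M : α}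

def agreementGrid (w : Fin n → α) (A M : α) : Fin n → Fin n → α :=
  fun i j => if w i = w j then A else M

lemma agreementGrid_comm (w : Fin n → α) (A M : α) (i j : Fin n) :
    agreementGrid w A M i j = agreementGrid w A M j i := by
  simp only [agreementGrid, eq_comm]

lemma rowC_agreementGrid (htwo : ∀ i, w i = A ∨ w i = M) (hanti : ∀ i, w i ≠ w i.rev)
    (i : Fin n) : rowC w (agreementGrid w A M) i := by
  rcases htwo i with hi | hi
  · exact Or.inl fun j => by grind [agreementGrid]
  · exact Or.inr fun j => by grind [agreementGrid]

lemma count_agreementGrid (hn : 2 ≤ n) (htwo : ∀ i, w i = A ∨ w i = M)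
    (hanti : ∀ i, w i ≠ w i.rev) : count w (agreementGrid w A M) = 2 * n := by
  set G := agreementGrid w A M
  have hrow : ∀ i, rowC w G i := rowC_agreementGrid htwo hanti
  have hcol : ∀ i, colC w G i := fun i =>
    (colC_iff_rowC_of_symm (agreementGrid_comm w A M) i).2 (hrow i)
  have hdiag : ¬ diagC w G :=
    not_lineContains_of_forall_eq (ℓ := fun j => G j j) (by omega) hanti (c := A)
      fun j => by simp [G, agreementGrid]
  have hadiag : ¬ adiagC w G :=
    not_lineContains_of_forall_eq (ℓ := fun j => G j j.rev) (by omega) hanti (c := M)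
      fun j => by simp [G, agreementGrid, hanti]
  have hR : {i | rowC w G i} = Set.univ := Set.eq_univ_of_forall hrow
  have hC : {i | colC w G i} = Set.univ := Set.eq_univ_of_forall hcol
  simp only [count, hR, hC, hdiag, hadiag, Set.ncard_univ, Nat.card_fin, if_false]
  omega

end LowerBound

theorem antisymmetric_fword_general {n : ℕ} (hn : 2 ≤ n) (w : Fin n → α)
    (A M : α) (htwo : ∀ i, w i = A ∨ w i = M)
    (hanti : ∀ i, w i ≠ w i.rev) :
    fword w = 2 * n := by
  classical
  refine IsGreatest.csSup_eq ⟨⟨agreementGrid w A M, count_agreementGrid hn htwo hanti⟩, ?_⟩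
  rintro _ ⟨G, rfl⟩
  exact count_le_two_mul hn hanti

theorem antisymmetric_fword {n : ℕ} (hn : 2 ≤ n) (w : Fin n → α)
    (A M : α) (hAM : A ≠ M) (htwo : ∀ i, w i = A ∨ w i = M)
    (hanti : ∀ i, w i ≠ w i.rev) :
    fword w = 2 * n :=
  antisymmetric_fword_general hn w A M htwo hanti

end WordGrid
end

section
/- Let n ≥ 2 and let w be a word of length n with w_i = w_{n-i+1} for all i (a palindrome). Then f(w,d) is asymptotic to (1/2)(n+2)^d as d → ∞, i.e., the limit as d → ∞ of f(w,d)/(n+2)^d equals 1/2. -/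
/-!
A line of `[n]^d` is a word over `n + 2` letters, one per coordinate: a constant value, "increasing"
or "decreasing"; reversing a line swaps the last two letters, and exactly `n^d` words have no moving
coordinate, so there are `((n+2)^d - n^d)/2` lines. This bounds `f(w,d)` from above.

For the lower bound colour a point `x` by `w t`, where the class `{t, t.rev}` is the one met most
often among the coordinates of `x`. The moving coordinates of the `i`-th point of a line all lie in
the class of `i`, so this grid reads the palindrome `w` along the line unless, at some point,
another class is met at least as often. A Chernoff bound with weights `5/4` and `4/5` shows that this
happens for at most `n^2 (n + 19/10)^d = o((n+2)^d)` lines.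
-/

namespace WordGridHD

variable {α : Type*}

/-- `(p; v)` is the canonical pair of a line in the grid `[n]^d`: all entries of `v` lie in
`{-1, 0, +1}`, the first nonzero entry of `v` is `+1`, and all the points
`p, p + v, …, p + (n-1)v` have all coordinates in `[n] = {1, …, n}`. -/
def IsCanonLine (n d : ℕ) (p v : Fin d → ℤ) : Prop :=
  (∀ j, v j = -1 ∨ v j = 0 ∨ v j = 1) ∧
  (∃ j, v j = 1 ∧ ∀ j' < j, v j' = 0) ∧
  (∀ i : ℕ, i < n → ∀ j, 1 ≤ p j + i * v j ∧ p j + i * v j ≤ n)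

/-- The line with canonical pair `(p; v)` contains the word `w` (forwards or backwards)
in the grid `G`. -/
def lineC {n d : ℕ} (w : Fin n → α) (G : (Fin d → ℤ) → α) (p v : Fin d → ℤ) : Prop :=
  (∀ i : Fin n, G (fun j => p j + (i : ℕ) * v j) = w i) ∨
  (∀ i : Fin n, G (fun j => p j + (i : ℕ) * v j) = w i.rev)

/-- `f(w,G)`: the number of lines of `[n]^d` containing `w` in the grid `G`. -/
noncomputable def count {n : ℕ} (d : ℕ) (w : Fin n → α) (G : (Fin d → ℤ) → α) : ℕ :=
  {pv : (Fin d → ℤ) × (Fin d → ℤ) |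
    IsCanonLine n d pv.1 pv.2 ∧ lineC w G pv.1 pv.2}.ncard

/-- `f(w,d)`: the maximum of `f(w,G)` over all `(n,d)`-grids `G`. -/
noncomputable def fword {n : ℕ} (w : Fin n → α) (d : ℕ) : ℕ :=
  sSup {m | ∃ G : (Fin d → ℤ) → α, count d w G = m}

open Finset

lemma card_one_le_prod_le {ι β : Type*} [Fintype ι] [DecidableEq ι] [Fintype β] (u : β → ℝ)
    (hu : ∀ c, 0 ≤ u c) :
    (#{ω : ι → β | 1 ≤ ∏ j, u (ω j)} : ℝ) ≤ (∑ c, u c) ^ Fintype.card ι :=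
  calc (#{ω : ι → β | 1 ≤ ∏ j, u (ω j)} : ℝ)
      = ∑ ω ∈ {ω : ι → β | 1 ≤ ∏ j, u (ω j)}, 1 := by simp
    _ ≤ ∑ ω ∈ {ω : ι → β | 1 ≤ ∏ j, u (ω j)}, ∏ j, u (ω j) :=
        sum_le_sum fun ω hω => (mem_filter.mp hω).2
    _ ≤ ∑ ω : ι → β, ∏ j, u (ω j) :=
        sum_le_sum_of_subset_of_nonneg (filter_subset _ _)
          fun ω _ _ => prod_nonneg fun j _ => hu (ω j)
    _ = (∑ c, u c) ^ Fintype.card ι := by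
        rw [← Fintype.prod_sum, prod_const, card_univ]

open Filter Topology in
lemma tendsto_div_pow_nhds_half {f : ℕ → ℝ} {a b c K : ℝ} (ha : 0 ≤ a) (hab : a < b)
    (hc : 0 ≤ c) (hcb : c < b) (hlow : ∀ d, (b ^ d - a ^ d) / 2 - K * c ^ d ≤ f d)
    (hup : ∀ d, f d ≤ b ^ d / 2) :
    Tendsto (fun d => f d / b ^ d) atTop (𝓝 (1 / 2)) := by
  have hb : 0 < b := ha.trans_lt hab
  have hgeom {r : ℝ} (hr : 0 ≤ r) (hrb : r < b) : Tendsto (fun d : ℕ => (r / b) ^ d) atTop (𝓝 0) :=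
    tendsto_pow_atTop_nhds_zero_of_lt_one (div_nonneg hr hb.le) ((div_lt_one hb).mpr hrb)
  have hlim :
      Tendsto (fun d : ℕ => 1 / 2 - (a / b) ^ d / 2 - K * (c / b) ^ d) atTop (𝓝 (1 / 2)) := by
    simpa using ((hgeom ha hab).div_const 2).const_sub (1 / 2 : ℝ) |>.sub
      ((hgeom hc hcb).const_mul K)
  refine tendsto_of_tendsto_of_tendsto_of_le_of_le hlim tendsto_const_nhds (fun d => ?_) fun d => ?_
  · calc 1 / 2 - (a / b) ^ d / 2 - K * (c / b) ^ d = ((b ^ d - a ^ d) / 2 - K * c ^ d) / b ^ d := by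
          rw [div_pow, div_pow]
          field_simp
    _ ≤ f d / b ^ d := by gcongr; exact hlow d
  · calc f d / b ^ d ≤ (b ^ d / 2) / b ^ d := by gcongr; exact hup d
    _ = 1 / 2 := by field_simp

/-- The `0`-based index of a grid value `a ∈ [1, n]` (arbitrary outside that range). -/
def gridIndex {n : ℕ} [NeZero n] (a : ℤ) : Fin n := Fin.ofNat n (a - 1).toNat

@[simp]
lemma gridIndex_val_add_one {n : ℕ} [NeZero n] (c : Fin n) : gridIndex ((c : ℕ) + 1 : ℤ) = c := by
  ext
  simp [gridIndex]

/-- One coordinate of a line of `[n]^d`: a constant `c` (the grid value `c + 1`), or a coordinate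
running through `1, …, n` (`true`) or `n, …, 1` (`false`). -/
abbrev LineCoord (n : ℕ) := Fin n ⊕ Bool

namespace LineCoord

variable {n : ℕ}

def start : LineCoord n → ℤ
  | .inl c => (c : ℕ) + 1
  | .inr true => 1
  | .inr false => n

def dir : LineCoord n → ℤ
  | .inl _ => 0
  | .inr true => 1
  | .inr false => -1

def point (i : Fin n) : LineCoord n → Fin n
  | .inl c => c
  | .inr true => i
  | .inr false => i.rev

def reverse : LineCoord n → LineCoord n := Sum.map id not

lemma start_add_mul_dir (i : Fin n) (c : LineCoord n) :
    c.start + (i : ℕ) * c.dir = ((c.point i : ℕ) : ℤ) + 1 := by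
  have hi := i.isLt
  rcases c with c | _ | _
  · simp [start, dir, point]
  · simp only [start, dir, point, Fin.val_rev]
    push_cast [Nat.sub_sub, show i.val + 1 ≤ n by omega]
    ring
  · simp [start, dir, point, add_comm]

lemma start_dir_injective : Function.Injective fun c : LineCoord n => (c.start, c.dir) := by
  rintro (c | _ | _) (c' | _ | _) h <;> simp_all [start, dir, Fin.ext_iff]

lemma reverse_involutive : Function.Involutive (reverse (n := n)) := by
  rintro (c | b) <;> simp [reverse]

def ofStartDir [NeZero n] (a b : ℤ) : LineCoord n :=
  if b = 1 then .inr true else if b = -1 then .inr false else .inl (gridIndex a)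

lemma dir_mem (c : LineCoord n) : c.dir = -1 ∨ c.dir = 0 ∨ c.dir = 1 := by
  rcases c with _ | _ | _ <;> simp [dir]

lemma start_dir_ofStartDir [NeZero n] {a b : ℤ} (hb : b = -1 ∨ b = 0 ∨ b = 1)
    (ha : 1 ≤ a ∧ a ≤ n) (ha' : 1 ≤ a + (n - 1) * b ∧ a + (n - 1) * b ≤ n) :
    ((ofStartDir a b : LineCoord n).start, (ofStartDir a b : LineCoord n).dir) = (a, b) := by
  rcases hb with rfl | rfl | rfl
  · simp [ofStartDir, start, dir]; omega
  · have hlt : (a - 1).toNat < n := by omega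
    simp only [ofStartDir, start, dir, zero_ne_one, if_false, gridIndex, Fin.val_ofNat,
      Nat.mod_eq_of_lt hlt, show (0 : ℤ) ≠ -1 by norm_num, Prod.mk.injEq, and_true]
    omega
  · simp [ofStartDir, start, dir]; omega

end LineCoord

section

open scoped Classical

variable {n d : ℕ}

def linePV (ω : Fin d → LineCoord n) : (Fin d → ℤ) × (Fin d → ℤ) :=
  (fun j => (ω j).start, fun j => (ω j).dir)

def IsCanon (ω : Fin d → LineCoord n) : Prop :=
  ∃ j, ω j = .inr true ∧ ∀ k < j, (ω k).isLeft

lemma linePV_injective : Function.Injective (linePV (n := n) (d := d)) := by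
  intro ω ω' h
  funext j
  exact LineCoord.start_dir_injective (Prod.ext (congrFun (congrArg Prod.fst h) j)
    (congrFun (congrArg Prod.snd h) j))

lemma isCanonLine_linePV {ω : Fin d → LineCoord n} (hω : IsCanon ω) :
    IsCanonLine n d (linePV ω).1 (linePV ω).2 := by
  refine ⟨fun j => ?_, ?_, fun i hi j => ?_⟩
  · exact (ω j).dir_mem
  · obtain ⟨j, hj, hleft⟩ := hω
    refine ⟨j, by simp [linePV, hj, LineCoord.dir], fun k hk => ?_⟩
    obtain ⟨c, hc⟩ := Sum.isLeft_iff.mp (hleft k hk)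
    simp [linePV, hc, LineCoord.dir]
  · have := LineCoord.start_add_mul_dir ⟨i, hi⟩ (ω j)
    have := ((ω j).point ⟨i, hi⟩).isLt
    simp only [linePV] at *
    omega

lemma exists_linePV_eq [NeZero n] {p v : Fin d → ℤ} (h : IsCanonLine n d p v) :
    ∃ ω : Fin d → LineCoord n, IsCanon ω ∧ linePV ω = (p, v) := by
  obtain ⟨hdir, ⟨j, hj, hzero⟩, hrange⟩ := h
  have hn := Nat.pos_of_neZero n
  have hω : ∀ k, ((LineCoord.ofStartDir (p k) (v k) : LineCoord n).start,
      (LineCoord.ofStartDir (p k) (v k) : LineCoord n).dir) = (p k, v k) := fun k => by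
    have h0 := hrange 0 hn k
    have h1 := hrange (n - 1) (by omega) k
    push_cast [Nat.one_le_iff_ne_zero.mpr hn.ne'] at h0 h1
    exact LineCoord.start_dir_ofStartDir (hdir k) (by simpa using h0) h1
  refine ⟨fun k => LineCoord.ofStartDir (p k) (v k), ⟨j, ?_, fun k hk => ?_⟩, ?_⟩
  · simp [LineCoord.ofStartDir, hj]
  · simp [LineCoord.ofStartDir, hzero k hk]
  · ext k
    · exact congrArg Prod.fst (hω k)
    · exact congrArg Prod.snd (hω k)

lemma count_eq_card [NeZero n] (w : Fin n → α) (G : (Fin d → ℤ) → α) :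
    count d w G = #{ω : Fin d → LineCoord n | IsCanon ω ∧ lineC w G (linePV ω).1 (linePV ω).2} := by
  have : {pv : (Fin d → ℤ) × (Fin d → ℤ) | IsCanonLine n d pv.1 pv.2 ∧ lineC w G pv.1 pv.2} =
      linePV '' {ω : Fin d → LineCoord n | IsCanon ω ∧ lineC w G (linePV ω).1 (linePV ω).2} := by
    ext ⟨p, v⟩
    constructor
    · rintro ⟨hline, hw⟩
      obtain ⟨ω, hω, hpv⟩ := exists_linePV_eq hline
      exact ⟨ω, ⟨hω, by rwa [hpv]⟩, hpv⟩
    · rintro ⟨ω, ⟨hω, hw⟩, hpv⟩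
      rw [← hpv]
      exact ⟨isCanonLine_linePV hω, hw⟩
  rw [count, this, Set.ncard_image_of_injective _ linePV_injective, ← Set.ncard_coe_finset]
  simp

lemma isCanon_or_isCanon_reverse_iff (ω : Fin d → LineCoord n) :
    IsCanon ω ∨ IsCanon (LineCoord.reverse ∘ ω) ↔ ∃ j, (ω j).isRight := by
  constructor
  · rintro (⟨j, hj, -⟩ | ⟨j, hj, -⟩) <;>
      exact ⟨j, by cases h : ω j <;> simp_all [LineCoord.reverse]⟩
  · rintro ⟨j₀, hj₀⟩
    obtain ⟨j, hj, hmin⟩ := (univ.filter fun j => (ω j).isRight).exists_min_image id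
      ⟨j₀, by simpa using hj₀⟩
    have hleft : ∀ k < j, (ω k).isLeft := fun k hk => by
      by_contra h
      exact (hmin k (by simpa using h)).not_gt hk
    obtain ⟨b, hb⟩ := Sum.isRight_iff.mp (by simpa using hj)
    cases b
    · exact .inr ⟨j, by simp [LineCoord.reverse, hb],
        fun k hk => by simpa [LineCoord.reverse] using hleft k hk⟩
    · exact .inl ⟨j, hb, hleft⟩

lemma not_isCanon_and_isCanon_reverse (ω : Fin d → LineCoord n) :
    ¬ (IsCanon ω ∧ IsCanon (LineCoord.reverse ∘ ω)) := by
  rintro ⟨⟨j, hj, hleft⟩, ⟨k, hk, hleft'⟩⟩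
  have hk : ω k = .inr false := by
    rw [← LineCoord.reverse_involutive (ω k)]
    exact congrArg LineCoord.reverse hk
  rcases lt_trichotomy j k with h | rfl | h
  · simpa [LineCoord.reverse, hj] using hleft' j h
  · simp_all
  · simpa [hk] using hleft k h

lemma card_isCanon_reverse :
    #{ω : Fin d → LineCoord n | IsCanon (LineCoord.reverse ∘ ω)} =
      #{ω : Fin d → LineCoord n | IsCanon ω} :=
  card_nbij' (LineCoord.reverse ∘ ·) (LineCoord.reverse ∘ ·)
    (fun ω hω => by simpa using hω)
    (fun ω hω => by simpa [Function.comp_def, LineCoord.reverse_involutive _] using hω)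
    (fun ω _ => by simp [Function.comp_def, LineCoord.reverse_involutive _])
    (fun ω _ => by simp [Function.comp_def, LineCoord.reverse_involutive _])

lemma card_forall_isLeft : #{ω : Fin d → LineCoord n | ∀ j, (ω j).isLeft} = n ^ d := by
  have : ({ω : Fin d → LineCoord n | ∀ j, (ω j).isLeft} : Finset _) =
      Fintype.piFinset fun _ => univ.map .inl := by
    ext ω
    simp only [mem_filter, mem_univ, true_and, Fintype.mem_piFinset, mem_map,
      Function.Embedding.inl_apply]
    exact forall_congr' fun j => by rw [Sum.isLeft_iff]; exact exists_congr fun _ => eq_comm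
  rw [this, Fintype.card_piFinset]
  simp

theorem two_mul_card_isCanon_add_pow :
    2 * #{ω : Fin d → LineCoord n | IsCanon ω} + n ^ d = (n + 2) ^ d := by
  have hsplit := card_filter_add_card_filter_not
    (s := (univ : Finset (Fin d → LineCoord n))) fun ω => ∃ j, (ω j).isRight
  rw [← filter_congr fun ω _ => isCanon_or_isCanon_reverse_iff ω, filter_or,
    card_union_of_disjoint
      (disjoint_filter.mpr fun ω _ h h' => not_isCanon_and_isCanon_reverse ω ⟨h, h'⟩),
    card_isCanon_reverse] at hsplit
  simp only [not_exists, Bool.not_eq_true, Sum.isRight_eq_false] at hsplit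
  rw [card_forall_isLeft] at hsplit
  simpa [two_mul] using hsplit

def revClass (t : Fin n) : Finset (Fin n) := {t, t.rev}

@[simp]
lemma mem_revClass {s t : Fin n} : s ∈ revClass t ↔ s = t ∨ s = t.rev := by
  simp [revClass]

lemma revClass_eq_of_mem {s t : Fin n} (h : s ∈ revClass t) : revClass s = revClass t := by
  rcases mem_revClass.mp h with rfl | rfl
  · rfl
  · simp [revClass, pair_comm]

lemma mem_revClass_of_mem_of_mem {y s i : Fin n} (hs : y ∈ revClass s) (hi : y ∈ revClass i) :
    s ∈ revClass i := by
  rw [← (revClass_eq_of_mem hs).symm.trans (revClass_eq_of_mem hi)]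
  simp

noncomputable def score (x : Fin d → Fin n) (t : Fin n) : ℕ := #{j | x j ∈ revClass t}

noncomputable def majority [NeZero n] (x : Fin d → Fin n) : Fin n :=
  (Finite.exists_max (score x)).choose

lemma score_le_score_majority [NeZero n] (x : Fin d → Fin n) (t : Fin n) :
    score x t ≤ score x (majority x) :=
  (Finite.exists_max (score x)).choose_spec t

lemma majority_mem_revClass [NeZero n] {x : Fin d → Fin n} {i : Fin n}
    (h : ∀ s ∉ revClass i, score x s < score x i) : majority x ∈ revClass i := by
  by_contra hm
  exact (h _ hm).not_ge (score_le_score_majority x i)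

noncomputable def majorityGrid [NeZero n] (w : Fin n → α) (y : Fin d → ℤ) : α :=
  w (majority fun j => gridIndex (y j))

def linePoint (ω : Fin d → LineCoord n) (i : Fin n) : Fin d → Fin n := fun j => (ω j).point i

lemma linePV_add_mul (ω : Fin d → LineCoord n) (i : Fin n) :
    (fun j => (linePV ω).1 j + (i : ℕ) * (linePV ω).2 j) =
      fun j => ((linePoint ω i j : ℕ) : ℤ) + 1 :=
  funext fun j => (ω j).start_add_mul_dir i

def IsAmbiguous (ω : Fin d → LineCoord n) : Prop :=
  ∃ i s, s ∉ revClass i ∧ score (linePoint ω i) i ≤ score (linePoint ω i) s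

lemma lineC_majorityGrid [NeZero n] {w : Fin n → α} (hpal : ∀ i, w i = w i.rev)
    {ω : Fin d → LineCoord n} (hω : ¬ IsAmbiguous ω) :
    lineC w (majorityGrid w) (linePV ω).1 (linePV ω).2 := by
  refine .inl fun i => ?_
  have hmaj : majority (linePoint ω i) ∈ revClass i :=
    majority_mem_revClass fun s hs => not_le.mp fun h => hω ⟨i, s, hs, h⟩
  rw [linePV_add_mul, majorityGrid]
  simp only [gridIndex_val_add_one]
  rcases mem_revClass.mp hmaj with h | h
  · rw [h]
  · rw [h, ← hpal]

lemma count_le_card_isCanon [NeZero n] (w : Fin n → α) (G : (Fin d → ℤ) → α) :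
    count d w G ≤ #{ω : Fin d → LineCoord n | IsCanon ω} := by
  rw [count_eq_card]
  exact card_le_card fun ω hω => by simp_all

lemma fword_le_card_isCanon [NeZero n] (w : Fin n → α) :
    fword w d ≤ #{ω : Fin d → LineCoord n | IsCanon ω} :=
  csSup_le ⟨_, majorityGrid w, rfl⟩ fun _ ⟨G, hG⟩ => hG ▸ count_le_card_isCanon w G

lemma card_isCanon_le_fword_add [NeZero n] {w : Fin n → α} (hpal : ∀ i, w i = w i.rev) :
    #{ω : Fin d → LineCoord n | IsCanon ω} ≤
      fword w d + #{ω : Fin d → LineCoord n | IsAmbiguous ω} := by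
  have hcount : count d w (majorityGrid w) ≤ fword w d :=
    le_csSup ⟨_, fun _ ⟨G, hG⟩ => hG ▸ count_le_card_isCanon w G⟩ ⟨_, rfl⟩
  refine (card_le_card fun ω hω => ?_).trans ((card_union_le _ _).trans
    (Nat.add_le_add_right (count_eq_card w (majorityGrid w) ▸ hcount) _))
  by_cases hamb : IsAmbiguous ω
  · simp [hamb]
  · simp_all [lineC_majorityGrid hpal hamb]

/-- Exponential weights for the Chernoff bound on `score x s - score x i`; the ratio `5/4` makes the
weight sum over all line coordinates at most `n + 19/10 < n + 2`. -/
noncomputable def revWeight (i s y : Fin n) : ℝ :=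
  if y ∈ revClass s then 5 / 4 else if y ∈ revClass i then 4 / 5 else 1

lemma revWeight_nonneg (i s y : Fin n) : 0 ≤ revWeight i s y := by
  unfold revWeight
  split_ifs <;> norm_num

lemma one_le_prod_revWeight {x : Fin d → Fin n} {i s : Fin n} (hs : s ∉ revClass i)
    (h : score x i ≤ score x s) : 1 ≤ ∏ j, revWeight i s (x j) := by
  have hprod : ∏ j, revWeight i s (x j) = (5 / 4 : ℝ) ^ score x s * (4 / 5) ^ score x i := by
    simp only [revWeight, prod_ite, prod_const, one_pow, mul_one, filter_filter, score]
    congr 3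
    exact filter_congr fun j _ =>
      ⟨And.right, fun hi => ⟨fun hs' => hs (mem_revClass_of_mem_of_mem hs' hi), hi⟩⟩
  calc (1 : ℝ) = (5 / 4 : ℝ) ^ score x i * (4 / 5) ^ score x i := by
        rw [← mul_pow]; norm_num
    _ ≤ _ := by
        rw [hprod]
        gcongr
        norm_num

lemma revWeight_le {i s : Fin n} (hs : s ∉ revClass i) (y : Fin n) :
    revWeight i s y ≤
      1 + (if y ∈ revClass s then 1 / 4 else 0) - (if y = i then 1 / 5 else 0) := by
  have hi : i ∉ revClass s := fun h => hs (mem_revClass_of_mem_of_mem h (by simp))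
  unfold revWeight
  split_ifs <;> norm_num <;> simp_all

lemma sum_revWeight_point_le {i s : Fin n} (hs : s ∉ revClass i) :
    ∑ c : LineCoord n, revWeight i s (c.point i) ≤ n + 19 / 10 := by
  have hmove : ∀ y ∈ revClass i, revWeight i s y = 4 / 5 := fun y hy => by
    rw [revWeight, if_neg fun h => hs (mem_revClass_of_mem_of_mem h hy), if_pos hy]
  have hfixed : ∑ y : Fin n, revWeight i s y ≤ n + 3 / 10 :=
    calc ∑ y : Fin n, revWeight i s y
        ≤ ∑ y : Fin n, (1 + (if y ∈ revClass s then 1 / 4 else 0) - (if y = i then 1 / 5 else 0)) :=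
          sum_le_sum fun y _ => revWeight_le hs y
      _ = n + #(revClass s) / 4 - 1 / 5 := by
          simp only [sum_add_distrib, sum_sub_distrib, sum_ite_mem, univ_inter, sum_const,
            card_univ, Fintype.card_fin, nsmul_eq_mul, sum_ite_eq', mem_univ, if_true]
          ring
      _ ≤ n + 3 / 10 := by
          have : (#(revClass s) : ℝ) ≤ 2 := by exact_mod_cast card_le_two
          linarith
  rw [Fintype.sum_sum_type, Fintype.sum_bool]
  simp only [LineCoord.point, hmove i (by simp), hmove i.rev (by simp)]
  linarith

theorem card_isAmbiguous_le :
    (#{ω : Fin d → LineCoord n | IsAmbiguous ω} : ℝ) ≤ n ^ 2 * (n + 19 / 10) ^ d := by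
  let pairs : Finset (Fin n × Fin n) := {q | q.2 ∉ revClass q.1}
  let tail (q : Fin n × Fin n) : Finset (Fin d → LineCoord n) :=
    {ω | 1 ≤ ∏ j, revWeight q.1 q.2 ((ω j).point q.1)}
  have hsub : ({ω | IsAmbiguous ω} : Finset (Fin d → LineCoord n)) ⊆ pairs.biUnion tail := by
    intro ω hω
    obtain ⟨i, s, hs, hscore⟩ := (mem_filter.mp hω).2
    exact mem_biUnion.mpr ⟨(i, s), by simpa [pairs] using hs,
      mem_filter.mpr ⟨mem_univ _, one_le_prod_revWeight hs hscore⟩⟩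
  have htail : ∀ q ∈ pairs, (#(tail q) : ℝ) ≤ (n + 19 / 10) ^ d := fun q hq => by
    have hq : q.2 ∉ revClass q.1 := by simpa [pairs] using hq
    have hmarkov := card_one_le_prod_le (ι := Fin d)
      (fun c : LineCoord n => revWeight q.1 q.2 (c.point q.1)) fun c => revWeight_nonneg _ _ _
    rw [Fintype.card_fin] at hmarkov
    exact hmarkov.trans (pow_le_pow_left₀ (sum_nonneg fun c _ => revWeight_nonneg _ _ _)
      (sum_revWeight_point_le hq) d)
  have hpairs : (#pairs : ℝ) ≤ n ^ 2 := by
    exact_mod_cast (card_filter_le _ _).trans (by simp [sq])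
  calc (#{ω | IsAmbiguous ω} : ℝ) ≤ ∑ q ∈ pairs, (#(tail q) : ℝ) := by
        exact_mod_cast (card_le_card hsub).trans card_biUnion_le
    _ ≤ ∑ q ∈ pairs, ((n : ℝ) + 19 / 10) ^ d := sum_le_sum htail
    _ ≤ n ^ 2 * (n + 19 / 10) ^ d := by
        rw [sum_const, nsmul_eq_mul]
        gcongr

lemma card_isCanon_eq (n d : ℕ) :
    (#{ω : Fin d → LineCoord n | IsCanon ω} : ℝ) = ((n + 2) ^ d - n ^ d) / 2 := by
  rw [eq_div_iff two_ne_zero, eq_sub_iff_add_eq, mul_comm]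
  exact_mod_cast two_mul_card_isCanon_add_pow

theorem fword_le_pow_div_two [NeZero n] (w : Fin n → α) (d : ℕ) :
    (fword w d : ℝ) ≤ (n + 2) ^ d / 2 := by
  have hup : (fword w d : ℝ) ≤ #{ω : Fin d → LineCoord n | IsCanon ω} := by
    exact_mod_cast fword_le_card_isCanon w
  linarith [card_isCanon_eq n d, pow_nonneg (Nat.cast_nonneg n : (0 : ℝ) ≤ n) d]

theorem pow_sub_pow_div_two_sub_le_fword [NeZero n] {w : Fin n → α} (hpal : ∀ i, w i = w i.rev)
    (d : ℕ) : ((n + 2) ^ d - n ^ d) / 2 - n ^ 2 * (n + 19 / 10) ^ d ≤ (fword w d : ℝ) := by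
  have hlow : (#{ω : Fin d → LineCoord n | IsCanon ω} : ℝ) ≤
      fword w d + #{ω : Fin d → LineCoord n | IsAmbiguous ω} := by
    exact_mod_cast card_isCanon_le_fword_add hpal
  linarith [card_isCanon_eq n d, card_isAmbiguous_le (n := n) (d := d)]

end

open Filter in
theorem palindrome_asymptotics {n : ℕ} (hn : 2 ≤ n) (w : Fin n → α)
    (hpal : ∀ i, w i = w i.rev) :
    Tendsto (fun d : ℕ => (fword w d : ℝ) / (n + 2) ^ d) atTop (nhds (1 / 2)) := by
  have : NeZero n := ⟨by omega⟩
  exact tendsto_div_pow_nhds_half (by positivity) (by linarith) (by positivity) (by linarith)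
    (pow_sub_pow_div_two_sub_le_fword hpal) (fword_le_pow_div_two w)

end WordGridHD
end

section
/- Let n ≥ 2 and let w be a word of length n with w_i ≠ w_{n-i+1} for some i (w is not a palindrome). Then f(w,d) is asymptotic to (1/4)(n+2)^d as d → ∞, i.e., the limit as d → ∞ of f(w,d)/(n+2)^d equals 1/4. -/
namespace WordGridHD

variable {α : Type*}

/-!
Upper bound. Fix `i₀` with `w i₀ ≠ w i₀.rev`. A line containing `w` is determined by its two points
carrying `w i₀` and `w i₀.rev`, and these agree coordinatewise once the values `i₀ + 1` and `n - i₀`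
are identified. Such related pairs number `(n + 2) ^ d`, and inside each class of related points
the points coloured `w i₀` and those coloured `w i₀.rev` are disjoint, so by AM-GM at most a
quarter of the related pairs join the two colours.

Lower bound. Give each coordinate of a line a slot: increasing, decreasing, or constant `m`. When
the number of moving coordinates is odd and any two constant values occur with multiplicities
differing by less than half of it (`Good`), the position `i` of a point on the line is read off, up to reversal, as the most frequent
pair of values `{q, n + 1 - q}`; the parity of the number of coordinates in the lower half of `[n]`
then orients the reading, consistently along the line. So one grid spells `w` along the lines of
all good types. Half of all `(n + 2) ^ d` types have an odd number of moving coordinates, the other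
conditions fail only exponentially rarely (a Chernoff bound), and each line has two types.
-/

open Finset

section Counting

variable {ι γ : Type*} [Fintype ι] [Fintype γ]

theorem sum_neg_one_pow_card_filter_mem [DecidableEq ι] [DecidableEq γ] (B : Finset γ) :
    ∑ t : ι → γ, (-1 : ℤ) ^ #{j | t j ∈ B} =
      ((Fintype.card γ : ℤ) - 2 * #B) ^ Fintype.card ι := by
  have hsign (t : ι → γ) : (-1 : ℤ) ^ #{j | t j ∈ B} = ∏ j, if t j ∈ B then -1 else 1 := by
    rw [prod_ite, prod_const, prod_const, one_pow, mul_one]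
  have hslot : ∑ s : γ, (if s ∈ B then (-1 : ℤ) else 1) = Fintype.card γ - 2 * #B := by
    have h (s : γ) : (if s ∈ B then (-1 : ℤ) else 1) = 1 - 2 * if s ∈ B then 1 else 0 := by
      split_ifs <;> norm_num
    simp_rw [h, sum_sub_distrib, ← mul_sum, sum_boole, filter_mem_eq_inter, univ_inter,
      sum_const, card_univ, nsmul_one]
  simp_rw [hsign]
  rw [← Fintype.prod_sum (fun _ s => if s ∈ B then (-1 : ℤ) else 1), hslot, prod_const, card_univ]

theorem two_mul_card_odd_card_filter_mem [DecidableEq ι] [DecidableEq γ] (B : Finset γ) :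
    2 * (#{t : ι → γ | Odd #{j | t j ∈ B}} : ℤ) =
      (Fintype.card γ : ℤ) ^ Fintype.card ι - ((Fintype.card γ : ℤ) - 2 * #B) ^ Fintype.card ι := by
  rw [← sum_neg_one_pow_card_filter_mem B]
  have hparity (k : ℕ) : (-1 : ℤ) ^ k = 1 - if Odd k then 2 else 0 := by
    rcases Nat.even_or_odd k with hk | hk
    · simp [hk.neg_one_pow, Nat.not_odd_iff_even.2 hk]
    · simp [hk.neg_one_pow, hk]
  simp_rw [hparity, sum_sub_distrib, sum_const, card_univ, Fintype.card_pi, prod_const,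
    ← sum_filter, sum_const, card_univ]
  simp [mul_comm]

theorem card_filter_sum_nonneg_le [DecidableEq ι] {x : ℝ} (hx : 1 ≤ x) (e : γ → ℤ) :
    (#{t : ι → γ | 0 ≤ ∑ j, e (t j)} : ℝ) ≤ (∑ s, x ^ e s) ^ Fintype.card ι := by
  have hx₀ : 0 < x := by linarith
  calc (#{t : ι → γ | 0 ≤ ∑ j, e (t j)} : ℝ)
      = ∑ t ∈ {t : ι → γ | 0 ≤ ∑ j, e (t j)}, 1 := by simp
    _ ≤ ∑ t ∈ {t : ι → γ | 0 ≤ ∑ j, e (t j)}, x ^ ∑ j, e (t j) :=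
        sum_le_sum fun t ht => one_le_zpow₀ hx (mem_filter.1 ht).2
    _ ≤ ∑ t : ι → γ, x ^ ∑ j, e (t j) :=
        sum_le_sum_of_subset_of_nonneg (subset_univ _) fun t _ _ => by positivity
    _ = ∑ t : ι → γ, ∏ j, x ^ e (t j) := by
        simp_rw [← Real.rpow_intCast, Int.cast_sum, Real.rpow_sum_of_pos hx₀]
    _ = (∑ s, x ^ e s) ^ Fintype.card ι := by
        rw [← Fintype.prod_sum (fun _ s => x ^ e s), prod_const, card_univ]

theorem card_filter_eq_two_mul_of_involutive {X : Type*} [Fintype X] {σ : X → X}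
    (hσ : Function.Involutive σ) {P Q : X → Prop} [DecidablePred P] [DecidablePred Q]
    (hP : ∀ x, P (σ x) ↔ P x) (hQ : ∀ x, P x → (Q (σ x) ↔ ¬ Q x)) :
    #{x | P x} = 2 * #{x | P x ∧ Q x} := by
  have hswap : #{x | P x ∧ ¬ Q x} = #{x | P x ∧ Q x} := by
    refine card_nbij' σ σ ?_ ?_ (fun x _ => hσ x) (fun x _ => hσ x)
    · intro x hx
      simp only [coe_filter, mem_univ, true_and, Set.mem_ofPred_eq] at hx ⊢
      exact ⟨(hP x).2 hx.1, (hQ x hx.1).2 hx.2⟩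
    · intro x hx
      simp only [coe_filter, mem_univ, true_and, Set.mem_ofPred_eq] at hx ⊢
      exact ⟨(hP x).2 hx.1, fun h => (hQ x hx.1).1 h hx.2⟩
  have hsplit := card_filter_add_card_filter_not (s := univ.filter P) Q
  simp only [filter_filter] at hsplit
  calc #{x | P x} = #{x | P x ∧ Q x} + #{x | P x ∧ ¬ Q x} := hsplit.symm
    _ = 2 * #{x | P x ∧ Q x} := by rw [hswap, two_mul]

theorem card_filter_pairs_eq_sum {X β : Type*} [DecidableEq β] (s : Finset X) (b : X → β)
    (A B : X → Prop) [DecidablePred A] [DecidablePred B] :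
    #{xy ∈ s ×ˢ s | b xy.1 = b xy.2 ∧ A xy.1 ∧ B xy.2} =
      ∑ c ∈ s.image b, #{x ∈ s | b x = c ∧ A x} * #{y ∈ s | b y = c ∧ B y} := by
  rw [card_eq_sum_card_fiberwise (f := fun xy => b xy.1) (t := s.image b)]
  · refine sum_congr rfl fun c _ => ?_
    rw [← card_product, filter_filter]
    congr 1
    ext ⟨x, y⟩
    simp only [mem_filter, mem_product]
    constructor
    · rintro ⟨⟨hx, hy⟩, ⟨hxy, hA, hB⟩, hc⟩
      exact ⟨⟨hx, hc, hA⟩, hy, hxy.symm.trans hc, hB⟩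
    · rintro ⟨⟨hx, hc, hA⟩, hy, hc', hB⟩
      exact ⟨⟨hx, hy⟩, ⟨hc.trans hc'.symm, hA, hB⟩, hc⟩
  · intro xy hxy
    exact mem_image_of_mem b (mem_product.1 (mem_filter.1 hxy).1).1

/-- AM-GM in each fibre of `b`: `4ac ≤ (a + c)²`. -/
theorem four_mul_card_pairs_le {X β : Type*} [DecidableEq β] (s : Finset X) (b : X → β)
    {A B : X → Prop} [DecidablePred A] [DecidablePred B] (hAB : ∀ x, A x → ¬ B x) :
    4 * #{xy ∈ s ×ˢ s | b xy.1 = b xy.2 ∧ A xy.1 ∧ B xy.2} ≤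
      #{xy ∈ s ×ˢ s | b xy.1 = b xy.2} := by
  classical
  have hall := card_filter_pairs_eq_sum s b (fun _ => True) (fun _ => True)
  simp only [and_true] at hall
  rw [card_filter_pairs_eq_sum, hall, mul_sum]
  refine sum_le_sum fun c _ => ?_
  have hle : #{x ∈ s | b x = c ∧ A x} + #{y ∈ s | b y = c ∧ B y} ≤ #{x ∈ s | b x = c} := by
    rw [← card_union_of_disjoint]
    · exact card_le_card fun x hx => by simp only [mem_union, mem_filter] at hx ⊢; tauto
    · exact disjoint_filter.2 fun x _ hA hB => hAB x hA.2 hB.2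
  nlinarith [sq_nonneg ((#{x ∈ s | b x = c ∧ A x} : ℤ) - #{y ∈ s | b y = c ∧ B y})]

theorem card_filter_forall_pairs_piFinset [DecidableEq ι] {δ : Type*} (S : Finset δ)
    (r : δ → δ → Prop) [DecidableRel r] :
    #{xy ∈ Fintype.piFinset (fun _ : ι => S) ×ˢ Fintype.piFinset (fun _ : ι => S) |
        ∀ j, r (xy.1 j) (xy.2 j)} =
      #{uv ∈ S ×ˢ S | r uv.1 uv.2} ^ Fintype.card ι := by
  rw [← card_univ, ← prod_const, ← Fintype.card_piFinset]
  refine card_nbij' (fun xy j => (xy.1 j, xy.2 j)) (fun f => (fun j => (f j).1, fun j => (f j).2))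
    ?_ ?_ (fun _ _ => rfl) (fun _ _ => rfl)
  · intro xy hxy
    simp only [mem_coe, mem_filter, mem_product, Fintype.mem_piFinset] at hxy ⊢
    exact fun j => ⟨⟨hxy.1.1 j, hxy.1.2 j⟩, hxy.2 j⟩
  · intro f hf
    simp only [mem_coe, mem_filter, mem_product, Fintype.mem_piFinset] at hf ⊢
    exact ⟨⟨fun j => (hf j).1.1, fun j => (hf j).1.2⟩, fun j => (hf j).2⟩

theorem card_filter_update_id_eq {δ : Type*} [DecidableEq δ] {S : Finset δ} {a b : δ}
    (ha : a ∈ S) (hb : b ∈ S) (hab : a ≠ b) :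
    #{uv ∈ S ×ˢ S | Function.update id b a uv.1 = Function.update id b a uv.2} = #S + 2 := by
  have h : {uv ∈ S ×ˢ S | Function.update id b a uv.1 = Function.update id b a uv.2} =
      S.diag ∪ {(a, b), (b, a)} := by
    ext ⟨u, v⟩
    simp only [mem_filter, mem_product, mem_union, mem_diag, mem_insert, mem_singleton,
      Prod.mk.injEq, Function.update_apply, id]
    constructor
    · rintro ⟨⟨hu, hv⟩, h⟩
      split_ifs at h <;> subst_vars <;> tauto
    · rintro (⟨hu, rfl⟩ | ⟨rfl, rfl⟩ | ⟨rfl, rfl⟩) <;> simp_all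
  rw [h, card_union_of_disjoint, diag_card, card_pair]
  · exact fun h => hab (Prod.ext_iff.1 h).1
  · simp only [disjoint_left, mem_diag, mem_insert, mem_singleton]
    rintro ⟨u, v⟩ ⟨-, huv⟩ (h | h) <;> simp only [Prod.mk.injEq] at huv h <;>
      exact hab (by rw [← h.1, ← h.2, huv])

end Counting

section LeadingOne

variable {ι : Type*} [LinearOrder ι]

def LeadingOne (v : ι → ℤ) : Prop := ∃ j, v j = 1 ∧ ∀ j' < j, v j' = 0

theorem LeadingOne.eq_of_smul_eq {v v' : ι → ℤ} {c c' : ℤ} (hv : LeadingOne v)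
    (hv' : LeadingOne v') (hc : c ≠ 0) (h : c • v = c' • v') : c = c' ∧ v = v' := by
  obtain ⟨j, hj, hbefore⟩ := hv
  obtain ⟨j', hj', hbefore'⟩ := hv'
  have hcoord (k : ι) : c * v k = c' * v' k := by simpa using congrFun h k
  have hcc : c = c' := by
    rcases lt_trichotomy j j' with hlt | rfl | hgt
    · have h1 := hcoord j
      rw [hj, hbefore' j hlt, mul_one, mul_zero] at h1
      exact absurd h1 hc
    · simpa [hj, hj'] using hcoord j
    · have h1 := hcoord j'
      rw [hj', hbefore j' hgt, mul_one, mul_zero] at h1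
      have h2 := hcoord j
      rw [hj, ← h1, zero_mul, mul_one] at h2
      exact absurd h2 hc
  subst hcc
  exact ⟨rfl, funext fun k => mul_left_cancel₀ hc (hcoord k)⟩

theorem leadingOne_neg_iff [WellFoundedLT ι] {v : ι → ℤ}
    (hv : ∀ j, v j = -1 ∨ v j = 0 ∨ v j = 1) (h0 : v ≠ 0) :
    LeadingOne (-v) ↔ ¬ LeadingOne v := by
  constructor
  · intro hneg hpos
    have := (hneg.eq_of_smul_eq hpos (c := -1) (c' := 1) (by norm_num) (by simp)).1
    norm_num at this
  · intro hpos
    obtain ⟨j, hj, hmin⟩ := wellFounded_lt.has_min {j | v j ≠ 0} (Function.ne_iff.1 h0)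
    have hbefore : ∀ j' < j, v j' = 0 := fun j' hj' => by_contra fun h => hmin j' h hj'
    refine ⟨j, ?_, fun j' hj' => by simp [hbefore j' hj']⟩
    have : v j ≠ 1 := fun h1 => hpos ⟨j, h1, hbefore⟩
    rcases hv j with h | h | h <;> simp_all

end LeadingOne

theorem epsilon_isMaxOn_eq {β γ : Type*} [Nonempty β] [LinearOrder γ] {f : β → γ} {s : Set β}
    {b : β} (hb : b ∈ s) (hmax : ∀ x ∈ s, x ≠ b → f x < f b) :
    Classical.epsilon (fun x => x ∈ s ∧ IsMaxOn f s x) = b := by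
  have hspec := Classical.epsilon_spec (p := fun x => x ∈ s ∧ IsMaxOn f s x)
    ⟨b, hb, isMaxOn_iff.2 fun x hx => by
      rcases eq_or_ne x b with rfl | hne
      exacts [le_rfl, (hmax x hx hne).le]⟩
  by_contra hne
  exact (hmax _ hspec.1 hne).not_ge (isMaxOn_iff.1 hspec.2 b hb)

section Lines

variable {n d : ℕ}

def linePt (p v : Fin d → ℤ) (i : ℕ) : Fin d → ℤ := fun j => p j + i * v j

theorem IsCanonLine.coord_cases {p v : Fin d → ℤ} (h : IsCanonLine n d p v) (hn : 0 < n)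
    (j : Fin d) : v j = 0 ∨ (v j = 1 ∧ p j = 1) ∨ (v j = -1 ∧ p j = n) := by
  have hfirst := h.2.2 0 hn j
  have hlast := h.2.2 (n - 1) (by omega) j
  push_cast [Nat.cast_sub hn] at hfirst hlast
  rcases h.1 j with hv | hv | hv <;>
    simp only [hv, mul_zero, mul_one, mul_neg, neg_zero, add_zero] at hfirst hlast <;> rw [hv] <;>
    omega

theorem IsCanonLine.linePt_mem_box {p v : Fin d → ℤ} (h : IsCanonLine n d p v) (k : Fin n) :
    linePt p v k ∈ Fintype.piFinset fun _ : Fin d => Icc (1 : ℤ) n := by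
  simpa [Fintype.mem_piFinset, linePt] using h.2.2 k k.isLt

/-- A moving coordinate takes the values `i₀ + 1` and `n - i₀` at positions `i₀` and `i₀.rev`, in
one order or the other. -/
theorem IsCanonLine.update_comp_linePt_rev {p v : Fin d → ℤ} (h : IsCanonLine n d p v)
    {i₀ k : Fin n} (hk : k = i₀ ∨ k = i₀.rev) :
    Function.update id ((n : ℤ) - i₀) ((i₀ : ℤ) + 1) ∘ linePt p v k =
      Function.update id ((n : ℤ) - i₀) ((i₀ : ℤ) + 1) ∘ linePt p v k.rev := by
  have hn : 0 < n := k.pos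
  funext j
  have hrev : ((k.rev : ℕ) : ℤ) = n - 1 - k := by rw [Fin.val_rev]; omega
  have hrev₀ : ((i₀.rev : ℕ) : ℤ) = n - 1 - i₀ := by rw [Fin.val_rev]; omega
  have hk' : (k : ℤ) = i₀ ∨ (k : ℤ) = n - 1 - i₀ := by
    rcases hk with rfl | rfl
    exacts [Or.inl rfl, Or.inr hrev₀]
  simp only [Function.comp_apply, linePt, Function.update_apply, id, hrev]
  rcases h.coord_cases hn j with hv | ⟨hv, hp⟩ | ⟨hv, hp⟩ <;> rw [hv] <;>
    try rw [hp]
  all_goals split_ifs <;> omega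

theorem eq_of_linePt_eq {p v p' v' : Fin d → ℤ} {k k' : Fin n} (hv : LeadingOne v)
    (hv' : LeadingOne v') (hk : k.rev ≠ k) (h₁ : linePt p v k = linePt p' v' k')
    (h₂ : linePt p v k.rev = linePt p' v' k'.rev) : p = p' ∧ v = v' := by
  have hrev (m : Fin n) : ((m.rev : ℕ) : ℤ) = n - 1 - m := by rw [Fin.val_rev]; omega
  have hsmul : ((k.rev : ℤ) - k) • v = ((k'.rev : ℤ) - k') • v' := by
    funext j
    have e₁ := congrFun h₁ j
    have e₂ := congrFun h₂ j
    simp only [linePt, Pi.smul_apply, smul_eq_mul] at e₁ e₂ ⊢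
    linear_combination e₂ - e₁
  have hc : ((k.rev : ℤ) - k) ≠ 0 := sub_ne_zero.2 (by exact_mod_cast Fin.val_ne_of_ne hk)
  obtain ⟨hcc, rfl⟩ := hv.eq_of_smul_eq hv' hc hsmul
  have hkk : (k : ℤ) = k' := by rw [hrev, hrev] at hcc; omega
  refine ⟨funext fun j => ?_, rfl⟩
  have e₁ := congrFun h₁ j
  simp only [linePt, hkk] at e₁
  linarith

end Lines

section UpperBound

variable {n d : ℕ}

noncomputable def box (n d : ℕ) : Finset (Fin d → ℤ) := Fintype.piFinset fun _ => Icc 1 n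

def lineSet (d : ℕ) (w : Fin n → α) (G : (Fin d → ℤ) → α) :
    Set ((Fin d → ℤ) × (Fin d → ℤ)) :=
  {pv | IsCanonLine n d pv.1 pv.2 ∧ lineC w G pv.1 pv.2}

theorem count_eq_ncard_lineSet (w : Fin n → α) (G : (Fin d → ℤ) → α) :
    count d w G = (lineSet d w G).ncard := rfl

section Ends

variable [DecidableEq α]

/-- The points at positions `i₀` and `i₀.rev` of the line, oriented so that on a line of
`lineSet d w G` the first one carries `w i₀` and the second `w i₀.rev`. -/
def lineEnds (w : Fin n → α) (G : (Fin d → ℤ) → α) (i₀ : Fin n) (pv : (Fin d → ℤ) × (Fin d → ℤ)) :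
    (Fin d → ℤ) × (Fin d → ℤ) :=
  let k := if ∀ i : Fin n, G (linePt pv.1 pv.2 i) = w i then i₀ else i₀.rev
  (linePt pv.1 pv.2 k, linePt pv.1 pv.2 k.rev)

noncomputable def endPairs (w : Fin n → α) (G : (Fin d → ℤ) → α) (i₀ : Fin n) :
    Finset ((Fin d → ℤ) × (Fin d → ℤ)) :=
  {xy ∈ box n d ×ˢ box n d |
    Function.update id ((n : ℤ) - i₀) ((i₀ : ℤ) + 1) ∘ xy.1 =
        Function.update id ((n : ℤ) - i₀) ((i₀ : ℤ) + 1) ∘ xy.2 ∧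
      G xy.1 = w i₀ ∧ G xy.2 = w i₀.rev}

theorem lineEnds_mapsTo (w : Fin n → α) (G : (Fin d → ℤ) → α) (i₀ : Fin n) :
    Set.MapsTo (lineEnds w G i₀) (lineSet d w G) (endPairs w G i₀) := by
  rintro ⟨p, v⟩ ⟨hcl, hw⟩
  simp only [lineEnds, endPairs, box, mem_coe, mem_filter, mem_product]
  split_ifs with hfwd
  · exact ⟨⟨hcl.linePt_mem_box _, hcl.linePt_mem_box _⟩,
      hcl.update_comp_linePt_rev (Or.inl rfl), hfwd i₀, hfwd i₀.rev⟩
  · have hbwd : ∀ i : Fin n, G (linePt p v i) = w i.rev := hw.resolve_left hfwd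
    exact ⟨⟨hcl.linePt_mem_box _, hcl.linePt_mem_box _⟩,
      hcl.update_comp_linePt_rev (Or.inr rfl), by simpa using hbwd i₀.rev,
      by simpa using hbwd i₀⟩

theorem lineEnds_injOn (w : Fin n → α) (G : (Fin d → ℤ) → α) {i₀ : Fin n} (hi₀ : i₀.rev ≠ i₀) :
    Set.InjOn (lineEnds w G i₀) (lineSet d w G) := by
  rintro ⟨p, v⟩ ⟨hcl, -⟩ ⟨p', v'⟩ ⟨hcl', -⟩ heq
  simp only [lineEnds, Prod.mk.injEq] at heq
  have hk : (if ∀ i : Fin n, G (linePt p v i) = w i then i₀ else i₀.rev).rev ≠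
      (if ∀ i : Fin n, G (linePt p v i) = w i then i₀ else i₀.rev) := by
    split_ifs
    exacts [hi₀, by simpa [eq_comm] using hi₀]
  obtain ⟨rfl, rfl⟩ := eq_of_linePt_eq hcl.2.1 hcl'.2.1 hk heq.1 heq.2
  rfl

end Ends

theorem card_box_pairs_update_eq {i₀ : Fin n} (hi₀ : i₀.rev ≠ i₀) :
    #{xy ∈ box n d ×ˢ box n d |
      Function.update id ((n : ℤ) - i₀) ((i₀ : ℤ) + 1) ∘ xy.1 =
        Function.update id ((n : ℤ) - i₀) ((i₀ : ℤ) + 1) ∘ xy.2} = (n + 2) ^ d := by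
  have hne : ((i₀ : ℤ) + 1) ≠ (n : ℤ) - i₀ := fun h =>
    hi₀ (Fin.ext (by have := congrArg (Nat.cast : ℕ → ℤ) (Fin.val_rev i₀); omega))
  have key := card_filter_forall_pairs_piFinset (ι := Fin d) (Icc (1 : ℤ) n)
    fun u u' => Function.update id ((n : ℤ) - i₀) ((i₀ : ℤ) + 1) u =
      Function.update id ((n : ℤ) - i₀) ((i₀ : ℤ) + 1) u'
  rw [card_filter_update_id_eq (by simp only [mem_Icc]; omega)
    (by simp only [mem_Icc]; omega) hne, Int.card_Icc,
    Fintype.card_fin, show (n + 1 - 1 : ℤ).toNat + 2 = n + 2 by omega] at key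
  rw [← key, box]
  congr 1
  ext xy
  simp [funext_iff]

theorem four_mul_count_le (w : Fin n → α) {i₀ : Fin n} (hw : w i₀ ≠ w i₀.rev)
    (G : (Fin d → ℤ) → α) : 4 * count d w G ≤ (n + 2) ^ d := by
  classical
  have hi₀ : i₀.rev ≠ i₀ := fun h => hw (by rw [h])
  calc 4 * count d w G ≤ 4 * #(endPairs w G i₀) := by
        rw [count_eq_ncard_lineSet, ← Set.ncard_coe_finset]
        exact Nat.mul_le_mul_left 4 <|
          Set.ncard_le_ncard_of_injOn _ (lineEnds_mapsTo w G i₀) (lineEnds_injOn w G hi₀)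
    _ ≤ (n + 2) ^ d := by
        rw [← card_box_pairs_update_eq (d := d) hi₀]
        exact four_mul_card_pairs_le (A := fun x => G x = w i₀) (B := fun y => G y = w i₀.rev)
          _ _ fun x h₁ h₂ => hw (h₁.symm.trans h₂)

theorem lineSet_finite (w : Fin n → α) {i₀ : Fin n} (hw : w i₀ ≠ w i₀.rev)
    (G : (Fin d → ℤ) → α) : (lineSet d w G).Finite := by
  classical
  exact (finite_toSet _).of_injOn (lineEnds_mapsTo w G i₀)
    (lineEnds_injOn w G fun h => hw (by rw [h]))

end UpperBound

/-- A coordinate of a line: `inl k` is constantly `k + 1`, `inr true` increases from `1` and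
`inr false` decreases from `n`. -/
abbrev Slot (n : ℕ) := Fin n ⊕ Bool

namespace Slot

variable {n : ℕ}

def start : Slot n → ℤ
  | .inl k => k + 1
  | .inr true => 1
  | .inr false => n

def dir : Slot n → ℤ
  | .inl _ => 0
  | .inr true => 1
  | .inr false => -1

def flip : Slot n → Slot n := Sum.map id not

theorem dir_flip (s : Slot n) : s.flip.dir = -s.dir := by
  rcases s with k | _ | _ <;> rfl

theorem flip_involutive : Function.Involutive (flip : Slot n → Slot n) := by
  rintro (k | _ | _) <;> rfl

theorem dir_cases (s : Slot n) : s.dir = -1 ∨ s.dir = 0 ∨ s.dir = 1 := by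
  rcases s with k | _ | _ <;> simp [dir]

theorem start_add_mul_dir_mem {i : ℕ} (hi : i < n) (s : Slot n) :
    1 ≤ s.start + i * s.dir ∧ s.start + i * s.dir ≤ n := by
  rcases s with k | _ | _ <;> simp [start, dir] <;> omega

theorem flip_eq_inr_iff (s : Slot n) (b : Bool) : s.flip = .inr b ↔ s = .inr !b := by
  rcases s with k | _ | _ <;> cases b <;> simp [flip]

theorem flip_const_iff (s : Slot n) (m : ℤ) :
    s.flip.dir = 0 ∧ s.flip.start = m ↔ s.dir = 0 ∧ s.start = m := by
  rcases s with k | _ | _ <;> simp [flip, dir, start]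

theorem start_dir_injective : Function.Injective fun s : Slot n => (s.start, s.dir) := by
  rintro (k | _ | _) (k' | _ | _) h <;> simp [start, dir] at h ⊢
  omega

end Slot

section Types

variable {n d : ℕ}

def numUp (t : Fin d → Slot n) : ℕ := #{j | t j = .inr true}

def numDown (t : Fin d → Slot n) : ℕ := #{j | t j = .inr false}

def numConst (t : Fin d → Slot n) (m : ℤ) : ℕ := #{j | (t j).dir = 0 ∧ (t j).start = m}

theorem card_filter_linePt (t : Fin d → Slot n) (i : ℕ) (P : ℤ → Prop) [DecidablePred P] :
    #{j | P (linePt (Slot.start ∘ t) (Slot.dir ∘ t) i j)} =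
      (if P (i + 1) then numUp t else 0) + (if P (n - i) then numDown t else 0) +
        #{j | (t j).dir = 0 ∧ P (t j).start} := by
  have key (s : Slot n) : (if P (s.start + i * s.dir) then 1 else 0) =
      (if P (i + 1) then 1 else 0) * (if s = .inr true then 1 else 0) +
        (if P (n - i) then 1 else 0) * (if s = .inr false then 1 else 0) +
          (if s.dir = 0 ∧ P s.start then 1 else 0) := by
    rcases s with k | _ | _ <;> simp [Slot.start, Slot.dir, add_comm, sub_eq_add_neg]
  rw [← boole_mul (P _) (numUp t), ← boole_mul (P _) (numDown t)]
  simp only [numUp, numDown, card_filter, mul_sum, ← sum_add_distrib]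
  exact sum_congr rfl fun j _ => key (t j)

def Good (n : ℕ) (t : Fin d → Slot n) : Prop :=
  Odd (numUp t + numDown t) ∧ ∀ m ∈ Icc (1 : ℤ) n, ∀ m' ∈ Icc (1 : ℤ) n, m ≠ m' →
    2 * numConst t m' < numUp t + numDown t + 2 * numConst t m

def pairCount (n : ℕ) (z : Fin d → ℤ) (q : ℕ) : ℕ := #{j | z j = q} + #{j | z j = n + 1 - q}

noncomputable def decode (n : ℕ) (z : Fin d → ℤ) : ℕ :=
  Classical.epsilon fun q => q ∈ Set.Icc 1 ((n + 1) / 2) ∧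
    IsMaxOn (pairCount n z) (Set.Icc 1 ((n + 1) / 2)) q

def numLow (n : ℕ) (z : Fin d → ℤ) : ℕ := #{j | 1 ≤ z j ∧ 2 * z j ≤ n}

def numLowConst (t : Fin d → Slot n) : ℕ :=
  #{j | (t j).dir = 0 ∧ 1 ≤ (t j).start ∧ 2 * (t j).start ≤ n}

/-- The grid: at a point `z` on a line of a good type, `decode n z` recovers the position on the
line up to reversal, and the parity of `numLow n z` fixes the direction of reading. -/
noncomputable def gridColor [NeZero n] (w : Fin n → α) (z : Fin d → ℤ) : α :=
  let k : Fin n := Fin.ofNat n (decode n z - 1)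
  w (if Even (numLow n z) then k else k.rev)

theorem decode_linePt {t : Fin d → Slot n} (hg : Good n t) (i : Fin n) :
    decode n (linePt (Slot.start ∘ t) (Slot.dir ∘ t) i) = min ((i : ℕ) + 1) (n - i) := by
  have hi := i.isLt
  have hcount (q : ℕ) : pairCount n (linePt (Slot.start ∘ t) (Slot.dir ∘ t) i) q =
      (if (i : ℤ) + 1 = q then numUp t else 0) + (if (n : ℤ) - i = q then numDown t else 0) +
        numConst t q + ((if (i : ℤ) + 1 = n + 1 - q then numUp t else 0) +
        (if (n : ℤ) - i = n + 1 - q then numDown t else 0) + numConst t ((n : ℤ) + 1 - q)) := by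
    exact congrArg₂ (· + ·) (card_filter_linePt t i (· = (q : ℤ)))
      (card_filter_linePt t i (· = (n : ℤ) + 1 - q))
  apply epsilon_isMaxOn_eq (by simp only [Set.mem_Icc]; omega)
  intro q hq hne
  simp only [Set.mem_Icc] at hq
  have h₁ := hg.2 (min (i + 1) (n - i) : ℕ) (by simp only [mem_Icc]; omega) q
    (by simp only [mem_Icc]; omega) (by omega)
  have h₂ := hg.2 ((n : ℤ) + 1 - (min (i + 1) (n - i) : ℕ)) (by simp only [mem_Icc]; omega)
    ((n : ℤ) + 1 - q) (by simp only [mem_Icc]; omega) (by omega)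
  rw [hcount, hcount]
  split_ifs <;> omega

theorem gridColor_linePt [NeZero n] (w : Fin n → α) {t : Fin d → Slot n} (hg : Good n t)
    (i : Fin n) :
    gridColor w (linePt (Slot.start ∘ t) (Slot.dir ∘ t) i) =
      w (if Even (numUp t + numLowConst t) then i else i.rev) := by
  have hodd := Nat.odd_iff.1 hg.1
  have hlow := card_filter_linePt t i (fun x => 1 ≤ x ∧ 2 * x ≤ n)
  have hk : (min ((i : ℕ) + 1) (n - i) - 1) % n = min ((i : ℕ) + 1) (n - i) - 1 :=
    Nat.mod_eq_of_lt (by omega)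
  simp only [gridColor, numLow, hlow, decode_linePt hg]
  congr 1
  simp only [numLowConst, Nat.even_iff]
  split_ifs at hlow ⊢ <;> simp only [Fin.ext_iff, Fin.val_ofNat, Fin.val_rev, hk] <;> omega

end Types

section LowerBound

variable {n d : ℕ}

theorem isCanonLine_slots {t : Fin d → Slot n} (hc : LeadingOne (Slot.dir ∘ t)) :
    IsCanonLine n d (Slot.start ∘ t) (Slot.dir ∘ t) :=
  ⟨fun j => (t j).dir_cases, hc, fun _ hi j => (t j).start_add_mul_dir_mem hi⟩

theorem slots_mem_lineSet [NeZero n] (w : Fin n → α) {t : Fin d → Slot n} (hg : Good n t)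
    (hc : LeadingOne (Slot.dir ∘ t)) :
    ((Slot.start ∘ t), (Slot.dir ∘ t)) ∈ lineSet d w (gridColor w) := by
  refine ⟨isCanonLine_slots hc, ?_⟩
  by_cases h : Even (numUp t + numLowConst t)
  · exact Or.inl fun i => (gridColor_linePt w hg i).trans (by rw [if_pos h])
  · exact Or.inr fun i => (gridColor_linePt w hg i).trans (by rw [if_neg h])

theorem slots_injective :
    Function.Injective fun t : Fin d → Slot n => ((Slot.start ∘ t), (Slot.dir ∘ t)) := by
  intro t t' h
  funext j
  simp only [Prod.mk.injEq] at h
  exact Slot.start_dir_injective (Prod.ext (congrFun h.1 j) (congrFun h.2 j))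

open Classical in
theorem card_good_leadingOne_le_count [NeZero n] (w : Fin n → α) {i₀ : Fin n}
    (hw : w i₀ ≠ w i₀.rev) :
    #{t : Fin d → Slot n | Good n t ∧ LeadingOne (Slot.dir ∘ t)} ≤ count d w (gridColor w) := by
  rw [count_eq_ncard_lineSet, ← Set.ncard_coe_finset, ← (slots_injective.injOn).ncard_image]
  refine Set.ncard_le_ncard ?_ (lineSet_finite w hw _)
  rintro _ ⟨t, ht, rfl⟩
  simp only [coe_filter, mem_univ, true_and, Set.mem_ofPred_eq] at ht
  exact slots_mem_lineSet w ht.1 ht.2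

theorem numUp_flip (t : Fin d → Slot n) : numUp (Slot.flip ∘ t) = numDown t := by
  simp only [numUp, numDown, Function.comp_apply, Slot.flip_eq_inr_iff]
  rfl

theorem numDown_flip (t : Fin d → Slot n) : numDown (Slot.flip ∘ t) = numUp t := by
  simp only [numUp, numDown, Function.comp_apply, Slot.flip_eq_inr_iff]
  rfl

theorem numConst_flip (t : Fin d → Slot n) (m : ℤ) :
    numConst (Slot.flip ∘ t) m = numConst t m := by
  simp only [numConst, Function.comp_apply, Slot.flip_const_iff]

theorem good_flip_iff (t : Fin d → Slot n) : Good n (Slot.flip ∘ t) ↔ Good n t := by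
  simp only [Good, numUp_flip, numDown_flip, numConst_flip, add_comm (numDown t)]

theorem dir_ne_zero_of_odd {t : Fin d → Slot n} (h : Odd (numUp t + numDown t)) :
    (Slot.dir ∘ t) ≠ 0 := by
  intro h0
  have hU : numUp t = 0 := card_eq_zero.2 <| filter_eq_empty_iff.2 fun j _ hj => by
    simpa [hj, Slot.dir] using congrFun h0 j
  have hD : numDown t = 0 := card_eq_zero.2 <| filter_eq_empty_iff.2 fun j _ hj => by
    simpa [hj, Slot.dir] using congrFun h0 j
  simp [hU, hD] at h

open Classical in
theorem card_good_eq_two_mul :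
    #{t : Fin d → Slot n | Good n t} =
      2 * #{t : Fin d → Slot n | Good n t ∧ LeadingOne (Slot.dir ∘ t)} := by
  refine card_filter_eq_two_mul_of_involutive (σ := (Slot.flip ∘ ·))
    (fun t => funext fun j => Slot.flip_involutive _) good_flip_iff fun t hg => ?_
  have hneg : Slot.dir ∘ Slot.flip ∘ t = -(Slot.dir ∘ t) := funext fun j => Slot.dir_flip _
  rw [hneg]
  exact leadingOne_neg_iff (fun j => (t j).dir_cases) (dir_ne_zero_of_odd hg.1)

theorem two_mul_card_odd :
    2 * (#{t : Fin d → Slot n | Odd (numUp t + numDown t)} : ℤ) =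
      ((n : ℤ) + 2) ^ d - ((n : ℤ) - 2) ^ d := by
  have hB (t : Fin d → Slot n) :
      #{j | t j ∈ ({.inr true, .inr false} : Finset (Slot n))} = numUp t + numDown t := by
    rw [numUp, numDown, ← card_union_of_disjoint (disjoint_filter.2 fun j _ h₁ h₂ => by
      simp [h₁] at h₂)]
    congr 1
    ext j
    simp
  have h :=
    two_mul_card_odd_card_filter_mem (ι := Fin d) ({.inr true, .inr false} : Finset (Slot n))
  simp only [hB] at h
  rw [h]
  simp
  ring

theorem card_fin_filter_val_add_one_eq {m : ℤ} (hm : m ∈ Icc (1 : ℤ) n) :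
    #{k : Fin n | (k : ℤ) + 1 = m} = 1 := by
  rw [mem_Icc] at hm
  rw [card_eq_one]
  refine ⟨⟨(m - 1).toNat, by omega⟩, ?_⟩
  ext k
  simp only [mem_filter, mem_univ, true_and, mem_singleton, Fin.ext_iff]
  omega

/-- `0 ≤ ∑ j, deviation m m' (t j)` says that `t` violates `Good` at `(m, m')`; weighting slots by
`(5 / 4) ^ deviation` gives the Chernoff bound on such types. -/
def deviation (m m' : ℤ) : Slot n → ℤ
  | .inl k => if (k : ℤ) + 1 = m' then 2 else if (k : ℤ) + 1 = m then -2 else 0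
  | .inr _ => -1

theorem sum_deviation {m m' : ℤ} (hne : m ≠ m') (t : Fin d → Slot n) :
    ∑ j, deviation m m' (t j) =
      2 * (numConst t m' : ℤ) - 2 * numConst t m - numUp t - numDown t := by
  have key (s : Slot n) : deviation m m' s =
      2 * (if s.dir = 0 ∧ s.start = m' then 1 else 0) -
        2 * (if s.dir = 0 ∧ s.start = m then 1 else 0) -
        (if s = .inr true then 1 else 0) - (if s = .inr false then 1 else 0) := by
    rcases s with k | _ | _ <;> simp [deviation, Slot.dir, Slot.start]
    split_ifs <;> omega
  simp only [key, sum_sub_distrib, ← mul_sum, numConst, numUp, numDown, Nat.cast_sum,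
    card_filter, Nat.cast_ite, Nat.cast_one, Nat.cast_zero]

theorem sum_zpow_deviation {m m' : ℤ} (hm : m ∈ Icc (1 : ℤ) n) (hm' : m' ∈ Icc (1 : ℤ) n)
    (hne : m ≠ m') : ∑ s : Slot n, (5 / 4 : ℝ) ^ deviation m m' s = n + 2 - 79 / 400 := by
  have key (k : Fin n) : (5 / 4 : ℝ) ^ deviation m m' (.inl k) =
      1 + (if (k : ℤ) + 1 = m' then 9 / 16 else 0) + (if (k : ℤ) + 1 = m then -9 / 25 else 0) := by
    simp only [deviation]
    split_ifs <;> first | omega | norm_num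
  rw [Fintype.sum_sum_type, Fintype.sum_bool]
  simp only [key, sum_add_distrib, sum_ite, sum_const, card_univ,
    card_fin_filter_val_add_one_eq hm, card_fin_filter_val_add_one_eq hm', Fintype.card_fin]
  simp only [deviation]
  norm_num
  ring

open Classical in
theorem card_unbalanced_le {m m' : ℤ} (hm : m ∈ Icc (1 : ℤ) n) (hm' : m' ∈ Icc (1 : ℤ) n)
    (hne : m ≠ m') :
    (#{t : Fin d → Slot n | numUp t + numDown t + 2 * numConst t m ≤ 2 * numConst t m'} : ℝ) ≤
      ((n : ℝ) + 2 - 79 / 400) ^ d := by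
  have h := card_filter_sum_nonneg_le (ι := Fin d) (x := 5 / 4) (by norm_num)
    (deviation (n := n) m m')
  rw [sum_zpow_deviation hm hm' hne, Fintype.card_fin] at h
  refine le_of_eq_of_le ?_ h
  congr 2
  exact filter_congr fun t _ => by rw [sum_deviation hne]; omega

open Classical in
theorem card_odd_le_card_good_add :
    (#{t : Fin d → Slot n | Odd (numUp t + numDown t)} : ℝ) ≤
      #{t : Fin d → Slot n | Good n t} + (n : ℝ) ^ 2 * ((n : ℝ) + 2 - 79 / 400) ^ d := by
  let unbalanced (q : ℤ × ℤ) : Finset (Fin d → Slot n) :=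
    {t | numUp t + numDown t + 2 * numConst t q.1 ≤ 2 * numConst t q.2}
  have hsub : ({t | Odd (numUp t + numDown t)} : Finset (Fin d → Slot n)) ⊆
      ({t | Good n t} : Finset (Fin d → Slot n)) ∪ (Icc (1 : ℤ) n).offDiag.biUnion unbalanced := by
    intro t ht
    rw [mem_filter] at ht
    by_cases hg : Good n t
    · exact mem_union_left _ (mem_filter.2 ⟨mem_univ _, hg⟩)
    · simp only [Good, ht.2, true_and, not_forall, not_lt] at hg
      obtain ⟨m, hm, m', hm', hne, hle⟩ := hg
      exact mem_union_right _ <| mem_biUnion.2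
        ⟨(m, m'), mem_offDiag.2 ⟨hm, hm', hne⟩, mem_filter.2 ⟨mem_univ _, hle⟩⟩
  have hpairs : ((Icc (1 : ℤ) n).offDiag.card : ℝ) ≤ (n : ℝ) ^ 2 := by
    rw [offDiag_card, Int.card_Icc, add_sub_cancel_right, Int.toNat_natCast]
    exact_mod_cast (Nat.sub_le _ _).trans (sq n).symm.le
  calc (#{t : Fin d → Slot n | Odd (numUp t + numDown t)} : ℝ)
      ≤ #{t : Fin d → Slot n | Good n t} +
          ∑ q ∈ (Icc (1 : ℤ) n).offDiag, (#(unbalanced q) : ℝ) := by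
        exact_mod_cast (card_le_card hsub).trans <|
          (card_union_le _ _).trans (Nat.add_le_add_left card_biUnion_le _)
    _ ≤ #{t : Fin d → Slot n | Good n t} +
          ∑ _q ∈ (Icc (1 : ℤ) n).offDiag, ((n : ℝ) + 2 - 79 / 400) ^ d := by
        gcongr with q hq
        obtain ⟨hm, hm', hne⟩ := mem_offDiag.1 hq
        exact card_unbalanced_le hm hm' hne
    _ ≤ #{t : Fin d → Slot n | Good n t} + (n : ℝ) ^ 2 * ((n : ℝ) + 2 - 79 / 400) ^ d := by
        rw [sum_const, nsmul_eq_mul]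
        have : (0 : ℝ) ≤ n := n.cast_nonneg
        gcongr
        exact pow_nonneg (by linarith) _

end LowerBound

section Fword

variable {n d : ℕ}

theorem bddAbove_counts (w : Fin n → α) {i₀ : Fin n} (hw : w i₀ ≠ w i₀.rev) :
    BddAbove {m | ∃ G : (Fin d → ℤ) → α, count d w G = m} := by
  classical
  refine bddAbove_def.2 ⟨(n + 2) ^ d, ?_⟩
  rintro _ ⟨G, rfl⟩
  have := four_mul_count_le w hw G
  omega

theorem count_le_fword (w : Fin n → α) {i₀ : Fin n} (hw : w i₀ ≠ w i₀.rev)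
    (G : (Fin d → ℤ) → α) : count d w G ≤ fword w d :=
  le_csSup (bddAbove_counts w hw) ⟨G, rfl⟩

theorem four_mul_fword_le (w : Fin n → α) {i₀ : Fin n} (hw : w i₀ ≠ w i₀.rev) :
    4 * fword w d ≤ (n + 2) ^ d := by
  classical
  obtain ⟨G, hG⟩ := Nat.sSup_mem (s := {m | ∃ G : (Fin d → ℤ) → α, count d w G = m})
    ⟨_, fun _ => w i₀, rfl⟩ (bddAbove_counts w hw)
  rw [fword, ← hG]
  exact four_mul_count_le w hw G

theorem sub_le_four_mul_fword (w : Fin n → α) {i₀ : Fin n} (hw : w i₀ ≠ w i₀.rev) :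
    ((n : ℝ) + 2) ^ d - ((n : ℝ) - 2) ^ d - 2 * (n : ℝ) ^ 2 * ((n : ℝ) + 2 - 79 / 400) ^ d ≤
      4 * fword w d := by
  classical
  have : NeZero n := ⟨i₀.pos.ne'⟩
  have hcanon : (#{t : Fin d → Slot n | Good n t ∧ LeadingOne (Slot.dir ∘ t)} : ℝ) ≤
      fword w d := by
    exact_mod_cast (card_good_leadingOne_le_count w hw).trans (count_le_fword w hw _)
  have hgood : (#{t : Fin d → Slot n | Good n t} : ℝ) =
      2 * #{t : Fin d → Slot n | Good n t ∧ LeadingOne (Slot.dir ∘ t)} := by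
    exact_mod_cast card_good_eq_two_mul
  have hodd : 2 * (#{t : Fin d → Slot n | Odd (numUp t + numDown t)} : ℝ) =
      ((n : ℝ) + 2) ^ d - ((n : ℝ) - 2) ^ d := by
    exact_mod_cast two_mul_card_odd
  linarith [card_odd_le_card_good_add (n := n) (d := d)]

end Fword

theorem tendsto_pow_sub_pow_div_pow {a b c K : ℝ} (ha : |a| < c) (hb : |b| < c) :
    Filter.Tendsto (fun d : ℕ => (c ^ d - a ^ d - K * b ^ d) / c ^ d) Filter.atTop (nhds 1) := by
  have hc : 0 < c := (abs_nonneg a).trans_lt ha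
  have hratio {x : ℝ} (hx : |x| < c) :
      Filter.Tendsto (fun d : ℕ => (x / c) ^ d) Filter.atTop (nhds 0) :=
    tendsto_pow_atTop_nhds_zero_of_abs_lt_one (by rwa [abs_div, abs_of_pos hc, div_lt_one hc])
  have hlim := ((tendsto_const_nhds (x := (1 : ℝ))).sub (hratio ha)).sub ((hratio hb).const_mul K)
  simp only [sub_zero, mul_zero] at hlim
  refine hlim.congr fun d => ?_
  rw [div_pow, div_pow]
  field_simp

open Filter in
theorem nonpalindrome_asymptotics_general {n : ℕ} (w : Fin n → α)
    (hnp : ∃ i, w i ≠ w i.rev) :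
    Tendsto (fun d : ℕ => (fword w d : ℝ) / (n + 2) ^ d) atTop (nhds (1 / 4)) := by
  obtain ⟨i₀, hw⟩ := hnp
  have hn : (1 : ℝ) ≤ n := by exact_mod_cast i₀.pos
  have hlower := (tendsto_pow_sub_pow_div_pow (K := 2 * (n : ℝ) ^ 2)
    (a := (n : ℝ) - 2) (b := (n : ℝ) + 2 - 79 / 400) (c := (n : ℝ) + 2)
    (abs_lt.2 ⟨by linarith, by linarith⟩) (abs_lt.2 ⟨by linarith, by linarith⟩)).div_const 4
  refine tendsto_of_tendsto_of_tendsto_of_le_of_le (by simpa using hlower) tendsto_const_nhds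
    (fun d => ?_) fun d => ?_
  · rw [div_right_comm]
    gcongr
    linarith [sub_le_four_mul_fword (d := d) w hw]
  · rw [div_le_iff₀ (by positivity)]
    have h : 4 * (fword w d : ℝ) ≤ ((n : ℝ) + 2) ^ d := by
      exact_mod_cast four_mul_fword_le (d := d) w hw
    linarith

open Filter in
theorem nonpalindrome_asymptotics {n : ℕ} (hn : 2 ≤ n) (w : Fin n → α)
    (hnp : ∃ i, w i ≠ w i.rev) :
    Tendsto (fun d : ℕ => (fword w d : ℝ) / (n + 2) ^ d) atTop (nhds (1 / 4)) :=
  nonpalindrome_asymptotics_general w hnp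

end WordGridHD
end

section
/- Let n ≥ 2 and let w be a word of length n using exactly two letters such that w_i ≠ w_{n-i+1} for all i. Then for every positive integer d, f(w,d) = (1/4)((n+2)^d − (n−2)^d). -/
namespace WordGridHD

variable {α : Type*}

/-!
A directed line is encoded coordinatewise: each coordinate is either constant or runs from one
end of `[n]` to the other.

Upper bound: orient every line containing `w` so that it reads `w` forwards; it is then
determined by its two endpoints, coloured `w₁ ≠ wₙ`. Group the directed lines by their constant
coordinates in `2, …, n-1`. If `t` coordinates are left free, the endpoints of the lines of a
group lie in a cube of `2^t` points, `x` of them coloured `w₁` and `y` coloured `wₙ`, so the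
group contains at most `x y ≤ 4^t / 4` lines, and none when `t = 0` (the endpoints would
coincide). Summing over the groups gives
`((n+2)^d - (n-2)^d) / 4`.

Lower bound: write `w_i` as the letter with index `ζ_i ∈ ZMod 2`, so that antisymmetry reads
`ζ_{n+1-i} = ζ_i + 1`, and colour a point by the sum of `ζ` over its coordinates. Along a line
with an odd number of non-constant coordinates this sum is `ζ_i` plus a constant, so the line
contains `w`, forwards or backwards. There are `((n+2)^d - (n-2)^d) / 4` such lines.
-/

open Finset

theorem sum_prod_apply_eq_pow {ι κ R : Type*} [Fintype ι] [DecidableEq ι] [Fintype κ]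
    [CommSemiring R] (f : κ → R) :
    ∑ g : ι → κ, ∏ i, f (g i) = (∑ c, f c) ^ Fintype.card ι := by
  rw [← card_univ, ← prod_const, Fintype.prod_sum]

theorem two_mul_card_filter_eq_card_of_involutive {β : Type*} (s : Finset β) (p : β → Prop)
    [DecidablePred p] (σ : β → β) (hσ : Function.Involutive σ) (hs : ∀ x ∈ s, σ x ∈ s)
    (hp : ∀ x ∈ s, p (σ x) ↔ ¬ p x) : 2 * #{x ∈ s | p x} = #s := by
  have hswap : #{x ∈ s | p x} = #{x ∈ s | ¬ p x} := by
    refine card_bij' (fun x _ => σ x) (fun x _ => σ x) ?_ ?_ (fun x _ => hσ x) (fun x _ => hσ x)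
    · intro x hx
      rw [mem_filter] at hx ⊢
      exact ⟨hs x hx.1, fun h => (hp x hx.1).1 h hx.2⟩
    · intro x hx
      rw [mem_filter] at hx ⊢
      exact ⟨hs x hx.1, (hp x hx.1).2 hx.2⟩
  rw [two_mul]
  nth_rewrite 2 [hswap]
  exact card_filter_add_card_filter_not p

theorem two_mul_card_odd_card_filter_eq {ι κ : Type*} [Fintype ι] [DecidableEq ι] [Fintype κ]
    (p : κ → Prop) [DecidablePred p] :
    (2 * #{g : ι → κ | Odd #{j | p (g j)}} : ℤ) =
      Fintype.card κ ^ Fintype.card ι - (∑ c, if p c then -1 else 1) ^ Fintype.card ι := by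
  have hsign (g : ι → κ) :
      1 - ∏ j, (if p (g j) then (-1 : ℤ) else 1) = if Odd #{j | p (g j)} then 2 else 0 := by
    rw [prod_ite, prod_const, prod_const_one, mul_one]
    rcases Nat.even_or_odd #{j | p (g j)} with h | h
    · simp [h.neg_one_pow, Nat.not_odd_iff_even.mpr h]
    · simp [h.neg_one_pow, h]
  have hcard : (Fintype.card κ : ℤ) ^ Fintype.card ι = ∑ _g : ι → κ, 1 := by simp
  rw [hcard, ← sum_prod_apply_eq_pow, ← sum_sub_distrib]
  simp_rw [hsign]
  rw [sum_ite, sum_const_zero, sum_const, add_zero, nsmul_eq_mul, mul_comm]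

theorem four_mul_card_mul_card_add_le {β : Type*} [DecidableEq β] {C X Y : Finset β} (hX : X ⊆ C)
    (hY : Y ⊆ C) (hXY : Disjoint X Y) : 4 * (#X * #Y) + (if #C = 1 then 1 else 0) ≤ #C ^ 2 := by
  have hC : #X + #Y ≤ #C := by
    rw [← card_union_of_disjoint hXY]
    exact card_le_card (union_subset hX hY)
  split_ifs with h1
  · have : #X = 0 ∨ #Y = 0 := by omega
    rcases this with h | h <;> simp [h, h1]
  · calc 4 * (#X * #Y) + 0 = 4 * #X * #Y := by ring
      _ ≤ (#X + #Y) ^ 2 := four_mul_le_sq_add _ _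
      _ ≤ #C ^ 2 := by gcongr

section EndpointPairs

variable {ι M : Type*} [Fintype ι] [DecidableEq ι] [Fintype M] [DecidableEq M]

theorem card_filter_getLeft?_eq (o : Option M) :
    #{y : M ⊕ Bool | y.getLeft? = o} = if o.isSome then 1 else 2 := by
  rcases o with _ | m
  · rw [show ({y : M ⊕ Bool | y.getLeft? = none} : Finset _) = {.inr false, .inr true} by
      ext y; rcases y with _ | _ | _ <;> simp]
    rfl
  · rw [show ({y : M ⊕ Bool | y.getLeft? = some m} : Finset _) = {.inl m} by
      ext y; rcases y with _ | _ | _ <;> simp]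
    rfl

theorem four_mul_card_fiber_add_le (X Y : Finset (ι → M ⊕ Bool)) (hXY : Disjoint X Y)
    (l : ι → Option M) :
    4 * #{g : ι → M ⊕ Bool × Bool | (Sum.map id Prod.fst ∘ g ∈ X ∧ Sum.map id Prod.snd ∘ g ∈ Y)
        ∧ (fun i => (g i).getLeft?) = l} + ∏ i, (if (l i).isSome then 1 else 0)
      ≤ ∏ i, (if (l i).isSome then 1 else 2) ^ 2 := by
  set C := Fintype.piFinset fun i => ({y : M ⊕ Bool | y.getLeft? = l i} : Finset _)
  have hC : #C = ∏ i, (if (l i).isSome then 1 else 2) := by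
    simp only [C, Fintype.card_piFinset, card_filter_getLeft?_eq]
  have hinj : #{g : ι → M ⊕ Bool × Bool |
      (Sum.map id Prod.fst ∘ g ∈ X ∧ Sum.map id Prod.snd ∘ g ∈ Y) ∧
        (fun i => (g i).getLeft?) = l} ≤ #(X ∩ C) * #(Y ∩ C) := by
    rw [← card_product]
    refine card_le_card_of_injOn
      (fun g => (Sum.map id Prod.fst ∘ g, Sum.map id Prod.snd ∘ g)) ?_ ?_
    · intro g hg
      simp only [coe_filter, mem_univ, true_and, Set.mem_ofPred_eq] at hg
      obtain ⟨⟨hX, hY⟩, rfl⟩ := hg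
      simp only [coe_product, Set.mem_prod, coe_inter, Set.mem_inter_iff, mem_coe, C,
        Fintype.mem_piFinset, mem_filter, mem_univ, true_and]
      refine ⟨⟨hX, fun i => ?_⟩, hY, fun i => ?_⟩ <;> simp only [Function.comp_apply] <;>
        rcases g i with _ | _ <;> rfl
    · intro g _ g' _ h
      simp only [Prod.mk.injEq] at h
      funext i
      have h1 := congrFun h.1 i
      have h2 := congrFun h.2 i
      rcases hg : g i with _ | ⟨_, _⟩ <;> rcases hg' : g' i with _ | ⟨_, _⟩ <;>
        simp_all
  have hall : ∏ i, (if (l i).isSome then 1 else 0) ≤ if #C = 1 then 1 else 0 := by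
    rw [Fintype.prod_boole]
    by_cases h : ∀ i, (l i).isSome
    · simp [hC, h]
    · simp [h]
  calc _ ≤ 4 * (#(X ∩ C) * #(Y ∩ C)) + (if #C = 1 then 1 else 0) := by gcongr
    _ ≤ #C ^ 2 := four_mul_card_mul_card_add_le inter_subset_right inter_subset_right
          (hXY.mono inter_subset_left inter_subset_left)
    _ = _ := by rw [hC, prod_pow]

/-- Read `g` as a directed line whose `i`-th coordinate is either a constant `inl m` or runs
between two ends `inr (a, b)`; then `Sum.map id Prod.fst ∘ g` and `Sum.map id Prod.snd ∘ g` are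
its endpoints. -/
theorem four_mul_card_endpoints_add_le (X Y : Finset (ι → M ⊕ Bool)) (hXY : Disjoint X Y) :
    4 * #{g : ι → M ⊕ Bool × Bool | Sum.map id Prod.fst ∘ g ∈ X ∧ Sum.map id Prod.snd ∘ g ∈ Y}
      + Fintype.card M ^ Fintype.card ι ≤ (Fintype.card M + 4) ^ Fintype.card ι := by
  have hsome : ∑ o : Option M, (if o.isSome then 1 else 0) = Fintype.card M := by
    rw [Fintype.sum_option]
    simp
  have hsq : ∑ o : Option M, (if o.isSome then 1 else 2) ^ 2 = Fintype.card M + 4 := by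
    simp [Fintype.sum_option, add_comm]
  rw [← hsq, ← hsome, ← sum_prod_apply_eq_pow, ← sum_prod_apply_eq_pow,
    card_eq_sum_card_fiberwise (f := fun g i => (g i).getLeft?) (t := univ) (by simp),
    mul_sum, ← sum_add_distrib]
  refine sum_le_sum fun l _ => ?_
  rw [filter_filter]
  exact four_mul_card_fiber_add_le X Y hXY l

end EndpointPairs

theorem exists_eq_one_and_forall_lt_iff {ι : Type*} [LinearOrder ι] {u : ι → ℤ} {j₀ : ι}
    (h₀ : u j₀ ≠ 0) (hmin : ∀ j < j₀, u j = 0) :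
    (∃ j, u j = 1 ∧ ∀ j' < j, u j' = 0) ↔ u j₀ = 1 := by
  refine ⟨fun ⟨j, hj, hlt⟩ => ?_, fun h => ⟨j₀, h, hmin⟩⟩
  rcases lt_trichotomy j j₀ with h | rfl | h
  · simp [hmin j h] at hj
  · exact hj
  · exact absurd (hlt j₀ h) h₀

/-- A coordinate of a directed line in `[n]`: `inl m` is the constant `m + 2`, and `inr (a, b)`
runs from the end coded by `a` to the end coded by `b`, where `true` codes `1` and `false`
codes `n`. -/
abbrev Code (n : ℕ) := Fin (n - 2) ⊕ Bool × Bool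

def endpoint (n : ℕ) : Fin (n - 2) ⊕ Bool → ℤ
  | .inl m => (m : ℤ) + 2
  | .inr b => if b then 1 else n

namespace Code

variable {n : ℕ}

def base (c : Code n) : ℤ := endpoint n (Sum.map id Prod.fst c)

def dir : Code n → ℤ
  | .inl _ => 0
  | .inr (b, b') => if b = b' then 0 else if b then 1 else -1

def reverse (c : Code n) : Code n := Sum.map id Prod.swap c

theorem dir_mem (c : Code n) : c.dir = -1 ∨ c.dir = 0 ∨ c.dir = 1 := by
  rcases c with _ | ⟨_ | _, _ | _⟩ <;> simp [dir]

theorem coord_mem_Icc (hn : 2 ≤ n) (c : Code n) {i : ℕ} (hi : i < n) :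
    1 ≤ c.base + i * c.dir ∧ c.base + i * c.dir ≤ n := by
  rcases c with m | ⟨_ | _, _ | _⟩ <;> simp [base, dir, endpoint] <;> omega

theorem coord_last (hn : 1 ≤ n) (c : Code n) :
    c.base + ((n - 1 : ℕ) : ℤ) * c.dir = endpoint n (Sum.map id Prod.snd c) := by
  rcases c with m | ⟨_ | _, _ | _⟩ <;> simp [base, dir, endpoint] <;> omega

theorem exists_base_dir_eq (hn : 2 ≤ n) {p v : ℤ} (hv : v = -1 ∨ v = 0 ∨ v = 1)
    (hp : 1 ≤ p ∧ p ≤ n) (hq : 1 ≤ p + ((n - 1 : ℕ) : ℤ) * v ∧ p + ((n - 1 : ℕ) : ℤ) * v ≤ n) :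
    ∃ c : Code n, c.base = p ∧ c.dir = v := by
  push_cast [Nat.cast_sub (by omega : 1 ≤ n)] at hq
  rcases hv with rfl | rfl | rfl
  · exact ⟨.inr (false, true), by simp [base, endpoint]; nlinarith, by simp [dir]⟩
  · by_cases h1 : p = 1
    · exact ⟨.inr (true, true), by simp [base, endpoint, h1], by simp [dir]⟩
    by_cases hn' : p = n
    · exact ⟨.inr (false, false), by simp [base, endpoint, hn'], by simp [dir]⟩
    exact ⟨.inl ⟨(p - 2).toNat, by omega⟩, by simp [base, endpoint]; omega, rfl⟩
  · exact ⟨.inr (true, false), by simp [base, endpoint]; nlinarith, by simp [dir]⟩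

theorem base_dir_injective (hn : 2 ≤ n) :
    Function.Injective fun c : Code n => (c.base, c.dir) := by
  rintro (m | ⟨_ | _, _ | _⟩) (m' | ⟨_ | _, _ | _⟩) h <;>
    simp [base, dir, endpoint, Fin.ext_iff] at h ⊢ <;> omega

theorem reverse_involutive : Function.Involutive (reverse : Code n → Code n) := by
  rintro (_ | ⟨_, _⟩) <;> rfl

theorem dir_reverse (c : Code n) : c.reverse.dir = -c.dir := by
  rcases c with _ | ⟨_ | _, _ | _⟩ <;> simp [reverse, dir]

theorem coord_reverse (c : Code n) (i : Fin n) :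
    c.reverse.base + (i : ℕ) * c.reverse.dir = c.base + (i.rev : ℕ) * c.dir := by
  have := i.isLt
  rcases c with _ | ⟨_ | _, _ | _⟩ <;> simp [reverse, base, dir, endpoint, Fin.val_rev] <;> omega

end Code

section Lines

variable {n d : ℕ}

def toLine (g : Fin d → Code n) : (Fin d → ℤ) × (Fin d → ℤ) :=
  (fun j => (g j).base, fun j => (g j).dir)

theorem toLine_injective (hn : 2 ≤ n) : Function.Injective (toLine : (Fin d → Code n) → _) := by
  intro g g' h
  simp only [toLine, Prod.mk.injEq] at h
  exact funext fun j => Code.base_dir_injective hn (Prod.ext (congrFun h.1 j) (congrFun h.2 j))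

theorem isCanonLine_toLine_iff (hn : 2 ≤ n) (g : Fin d → Code n) :
    IsCanonLine n d (toLine g).1 (toLine g).2 ↔ ∃ j, (g j).dir = 1 ∧ ∀ j' < j, (g j').dir = 0 :=
  ⟨fun h => h.2.1, fun h => ⟨fun j => (g j).dir_mem, h, fun _ hi j => (g j).coord_mem_Icc hn hi⟩⟩

theorem isCanonLine_reverse_iff (hn : 2 ≤ n) {g : Fin d → Code n} (hg : ∃ j, (g j).dir ≠ 0) :
    IsCanonLine n d (toLine (Code.reverse ∘ g)).1 (toLine (Code.reverse ∘ g)).2 ↔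
      ¬ IsCanonLine n d (toLine g).1 (toLine g).2 := by
  obtain ⟨j₀, hj₀, hmin⟩ := wellFounded_lt.has_min {j | (g j).dir ≠ 0} hg
  have hmin' : ∀ j < j₀, (g j).dir = 0 := fun j hj => by_contra fun h => hmin j h hj
  simp only [isCanonLine_toLine_iff hn, Function.comp_apply, Code.dir_reverse]
  rw [exists_eq_one_and_forall_lt_iff (u := fun j => -(g j).dir) (neg_ne_zero.2 hj₀)
      (fun j hj => neg_eq_zero.2 (hmin' j hj)),
    exists_eq_one_and_forall_lt_iff (u := fun j => (g j).dir) hj₀ hmin']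
  rcases (g j₀).dir_mem with h | h | h <;> simp_all

open scoped Classical in
theorem count_eq_card_s8 (hn : 2 ≤ n) (w : Fin n → α) (G : (Fin d → ℤ) → α) :
    count d w G = #{g : Fin d → Code n |
      IsCanonLine n d (toLine g).1 (toLine g).2 ∧ lineC w G (toLine g).1 (toLine g).2} := by
  rw [count, ← Set.ncard_coe_finset, coe_filter,
    ← Set.ncard_image_of_injective _ (toLine_injective hn)]
  congr 1
  ext ⟨p, v⟩
  simp only [Set.mem_image, Set.mem_ofPred_eq, mem_univ, true_and]
  refine ⟨fun ⟨hc, hl⟩ => ?_, ?_⟩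
  swap
  · rintro ⟨g, hg, hgpv⟩
    rwa [hgpv] at hg
  have hcode (j : Fin d) : ∃ c : Code n, c.base = p j ∧ c.dir = v j :=
    Code.exists_base_dir_eq hn (hc.1 j) (by simpa using hc.2.2 0 (by omega) j)
      (hc.2.2 (n - 1) (by omega) j)
  choose g hg using hcode
  have hgpv : toLine g = (p, v) := Prod.ext (funext fun j => (hg j).1) (funext fun j => (hg j).2)
  exact ⟨g, hgpv ▸ ⟨hc, hl⟩, hgpv⟩

def ReadsForward (w : Fin n → α) (G : (Fin d → ℤ) → α) (g : Fin d → Code n) : Prop :=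
  ∀ i : Fin n, G (fun j => (g j).base + (i : ℕ) * (g j).dir) = w i

theorem lineC_toLine_iff {w : Fin n → α} {G : (Fin d → ℤ) → α} {g : Fin d → Code n} :
    lineC w G (toLine g).1 (toLine g).2 ↔
      ReadsForward w G g ∨ ReadsForward w G (Code.reverse ∘ g) := by
  simp only [lineC, ReadsForward, toLine, Function.comp_apply, Code.coord_reverse]
  exact or_congr Iff.rfl ⟨fun h i => by simpa using h i.rev, fun h i => by simpa using h i.rev⟩

theorem ReadsForward.endpoints (hn : 2 ≤ n) {w : Fin n → α} {G : (Fin d → ℤ) → α}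
    {g : Fin d → Code n} (h : ReadsForward w G g) :
    G (endpoint n ∘ Sum.map id Prod.fst ∘ g) = w ⟨0, by omega⟩ ∧
      G (endpoint n ∘ Sum.map id Prod.snd ∘ g) = w ⟨n - 1, by omega⟩ := by
  constructor
  · simpa [Code.base, Function.comp_def] using h ⟨0, by omega⟩
  · simpa [Code.coord_last (by omega : 1 ≤ n), Function.comp_def] using h ⟨n - 1, by omega⟩

theorem not_isCanonLine_reverse (hn : 2 ≤ n) {g : Fin d → Code n}
    (hg : IsCanonLine n d (toLine g).1 (toLine g).2) :
    ¬ IsCanonLine n d (toLine (Code.reverse ∘ g)).1 (toLine (Code.reverse ∘ g)).2 := by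
  obtain ⟨j, hj, -⟩ := hg.2.1
  exact fun h => (isCanonLine_reverse_iff hn ⟨j, by simp_all [toLine]⟩).1 h hg

open scoped Classical in
theorem count_le_card_readsForward (hn : 2 ≤ n) (w : Fin n → α) (G : (Fin d → ℤ) → α) :
    count d w G ≤ #{g : Fin d → Code n | ReadsForward w G g} := by
  rw [count_eq_card_s8 hn]
  let orient (g : Fin d → Code n) := if ReadsForward w G g then g else Code.reverse ∘ g
  refine card_le_card_of_injOn orient (fun g hg => ?_) (fun g hg g' hg' h => ?_)
  · have hl := lineC_toLine_iff.1 (mem_filter.1 hg).2.2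
    simp only [coe_filter, mem_univ, true_and, Set.mem_ofPred_eq, orient]
    split_ifs with h
    exacts [h, hl.resolve_left h]
  · have hc := (mem_filter.1 hg).2.1
    have hc' := (mem_filter.1 hg').2.1
    simp only [orient] at h
    split_ifs at h
    · exact h
    · exact absurd (h ▸ hc) (not_isCanonLine_reverse hn hc')
    · exact absurd (h ▸ hc') (not_isCanonLine_reverse hn hc)
    · exact Code.reverse_involutive.injective.comp_left h

theorem four_mul_count_add_le (hn : 2 ≤ n) {w : Fin n → α}
    (hw : w ⟨0, by omega⟩ ≠ w ⟨n - 1, by omega⟩) (G : (Fin d → ℤ) → α) :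
    4 * count d w G + (n - 2) ^ d ≤ (n + 2) ^ d := by
  classical
  let X : Finset (Fin d → Fin (n - 2) ⊕ Bool) := {x | G (endpoint n ∘ x) = w ⟨0, by omega⟩}
  let Y : Finset (Fin d → Fin (n - 2) ⊕ Bool) := {x | G (endpoint n ∘ x) = w ⟨n - 1, by omega⟩}
  have hXY : Disjoint X Y := disjoint_filter.2 fun _ _ h0 h1 => hw (h0.symm.trans h1)
  have hle : count d w G ≤
      #{g : Fin d → Code n | Sum.map id Prod.fst ∘ g ∈ X ∧ Sum.map id Prod.snd ∘ g ∈ Y} := by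
    refine (count_le_card_readsForward hn w G).trans (card_le_card fun g hg => ?_)
    simpa [X, Y] using (mem_filter.1 hg).2.endpoints hn
  have key := four_mul_card_endpoints_add_le X Y hXY
  rw [Fintype.card_fin, Fintype.card_fin, show n - 2 + 4 = n + 2 by omega] at key
  refine le_trans ?_ key
  gcongr

noncomputable def coordParity (ζ : Fin n → ZMod 2) : ℤ → ZMod 2 :=
  Function.extend (fun i : Fin n => (i : ℤ) + 1) ζ 0

theorem coordParity_natCast_add_one (ζ : Fin n → ZMod 2) (i : Fin n) :
    coordParity ζ ((i : ℕ) + 1) = ζ i :=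
  Function.Injective.extend_apply (f := fun i : Fin n => (i : ℤ) + 1)
    (fun a b h => Fin.ext (by simpa using h)) ζ 0 i

theorem Code.exists_coordParity_eq (ζ : Fin n → ZMod 2) (hζ : ∀ i, ζ i.rev = ζ i + 1)
    (c : Code n) : ∃ k : ZMod 2, ∀ i : Fin n,
      coordParity ζ (c.base + (i : ℕ) * c.dir) = (if c.dir ≠ 0 then ζ i else 0) + k := by
  by_cases h0 : c.dir = 0
  · exact ⟨coordParity ζ c.base, fun i => by simp [h0]⟩
  rcases c with m | ⟨_ | _, _ | _⟩ <;> simp only [Code.dir] at h0 <;> simp at h0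
  · refine ⟨1, fun i => ?_⟩
    have hcoord : Code.base (.inr (false, true) : Code n) +
        (i : ℕ) * Code.dir (.inr (false, true) : Code n) = ((i.rev : ℕ) : ℤ) + 1 := by
      simp [Code.base, Code.dir, endpoint, Fin.val_rev]; omega
    rw [hcoord, coordParity_natCast_add_one, hζ]
    simp [Code.dir]
  · refine ⟨0, fun i => ?_⟩
    have hcoord : Code.base (.inr (true, false) : Code n) +
        (i : ℕ) * Code.dir (.inr (true, false) : Code n) = (i : ℕ) + 1 := by
      simp [Code.base, Code.dir, endpoint, add_comm]
    rw [hcoord, coordParity_natCast_add_one]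
    simp [Code.dir]

theorem lineC_of_odd_card {w : Fin n → α} (ζ : Fin n → ZMod 2) (dec : ZMod 2 → α)
    (hw : ∀ i, w i = dec (ζ i)) (hζ : ∀ i, ζ i.rev = ζ i + 1) {g : Fin d → Code n}
    (hodd : Odd #{j | (g j).dir ≠ 0}) :
    lineC w (fun x => dec (∑ j, coordParity ζ (x j))) (toLine g).1 (toLine g).2 := by
  choose k hk using fun j => (g j).exists_coordParity_eq ζ hζ
  have hsum (i : Fin n) :
      ∑ j, coordParity ζ ((g j).base + (i : ℕ) * (g j).dir) = ζ i + ∑ j, k j := by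
    rw [sum_congr rfl fun j _ => hk j i, sum_add_distrib, sum_ite, sum_const_zero, add_zero,
      sum_const, nsmul_eq_mul, (ZMod.natCast_eq_one_iff_odd).2 hodd, one_mul]
  rcases (by decide : ∀ K : ZMod 2, K = 0 ∨ K = 1) (∑ j, k j) with hK | hK
  · exact Or.inl fun i => by simp only [toLine]; rw [hsum, hK, add_zero, hw]
  · exact Or.inr fun i => by simp only [toLine]; rw [hsum, hK, ← hζ, hw]

theorem exists_le_four_mul_count_add (hn : 2 ≤ n) {w : Fin n → α} (ζ : Fin n → ZMod 2)
    (dec : ZMod 2 → α) (hw : ∀ i, w i = dec (ζ i)) (hζ : ∀ i, ζ i.rev = ζ i + 1) (d : ℕ) :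
    ∃ G : (Fin d → ℤ) → α, (n + 2) ^ d ≤ 4 * count d w G + (n - 2) ^ d := by
  classical
  refine ⟨fun x => dec (∑ j, coordParity ζ (x j)), ?_⟩
  have hodd := two_mul_card_odd_card_filter_eq (ι := Fin d) (fun c : Code n => c.dir ≠ 0)
  have hsign : ∑ c : Code n, (if c.dir ≠ 0 then (-1 : ℤ) else 1) = n - 2 := by
    simp [Code.dir, Fintype.sum_sum_type, Fintype.sum_prod_type]
    omega
  have hcard : Fintype.card (Code n) = n + 2 := by simp; omega
  rw [hsign, hcard, Fintype.card_fin] at hodd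
  set odd : Finset (Fin d → Code n) := {g | Odd #{j | (g j).dir ≠ 0}}
  have hhalf : 2 * #{g ∈ odd | IsCanonLine n d (toLine g).1 (toLine g).2} = #odd := by
    refine two_mul_card_filter_eq_card_of_involutive odd _ (Code.reverse ∘ ·)
      (fun g => funext fun j => Code.reverse_involutive (g j)) (fun g hg => ?_) (fun g hg => ?_)
    · simpa [odd, Code.dir_reverse] using hg
    · obtain ⟨j, hj⟩ := card_pos.1 (mem_filter.1 hg).2.pos
      exact isCanonLine_reverse_iff hn ⟨j, (mem_filter.1 hj).2⟩
  have hle : #{g ∈ odd | IsCanonLine n d (toLine g).1 (toLine g).2} ≤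
      count d w (fun x => dec (∑ j, coordParity ζ (x j))) := by
    rw [count_eq_card_s8 hn]
    refine card_le_card fun g hg => ?_
    simp only [odd, mem_filter, mem_univ, true_and] at hg ⊢
    exact ⟨hg.2, lineC_of_odd_card ζ dec hw hζ hg.1⟩
  zify [hn] at hhalf hle ⊢
  push_cast at hodd
  linarith

theorem exists_zmod_two_encoding {w : Fin n → α} {A M : α} (htwo : ∀ i, w i = A ∨ w i = M)
    (hanti : ∀ i, w i ≠ w i.rev) :
    ∃ (ζ : Fin n → ZMod 2) (dec : ZMod 2 → α),
      (∀ i, w i = dec (ζ i)) ∧ ∀ i, ζ i.rev = ζ i + 1 := by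
  classical
  refine ⟨fun i => if w i = A then 0 else 1, fun z => if z = 0 then A else M, fun i => ?_,
    fun i => ?_⟩
  · rcases htwo i with h | h <;> simp [h]
  · have hrev : w i.rev = A ↔ w i ≠ A := by
      refine ⟨fun h h' => hanti i (h'.trans h.symm), fun h => ?_⟩
      rcases htwo i.rev with h' | h'
      · exact h'
      · rcases htwo i with h'' | h''
        exacts [absurd h'' h, absurd (h''.trans h'.symm) (hanti i)]
    by_cases h : w i = A
    · simp [hrev, h]
    · simp [hrev, h]
      decide

theorem isGreatest_fword [Nonempty α] {w : Fin n → α} {B : ℕ} (hB : ∀ G, count d w G ≤ B) :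
    IsGreatest {m | ∃ G : (Fin d → ℤ) → α, count d w G = m} (fword w d) := by
  have hbdd : BddAbove {m | ∃ G : (Fin d → ℤ) → α, count d w G = m} := by
    refine ⟨B, ?_⟩
    rintro _ ⟨G, rfl⟩
    exact hB G
  exact ⟨Nat.sSup_mem ⟨_, fun _ => Classical.arbitrary α, rfl⟩ hbdd, fun _ hm => le_csSup hbdd hm⟩

end Lines

theorem antisymmetric_fword_hd_general {n : ℕ} (hn : 2 ≤ n) (w : Fin n → α)
    (A M : α) (htwo : ∀ i, w i = A ∨ w i = M)
    (hanti : ∀ i, w i ≠ w i.rev) (d : ℕ) :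
    4 * fword w d = (n + 2) ^ d - (n - 2) ^ d := by
  have hend : w ⟨0, by omega⟩ ≠ w ⟨n - 1, by omega⟩ := by
    simpa [Fin.rev] using hanti ⟨0, by omega⟩
  have hub := four_mul_count_add_le (d := d) hn hend
  obtain ⟨ζ, dec, hw, hζ⟩ := exists_zmod_two_encoding htwo hanti
  obtain ⟨G₀, hG₀⟩ := exists_le_four_mul_count_add hn ζ dec hw hζ d
  have : Nonempty α := ⟨A⟩
  obtain ⟨⟨G₁, hG₁⟩, hmax⟩ := isGreatest_fword (w := w) (B := (n + 2) ^ d) fun G => by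
    have := hub G
    omega
  have h₁ := hub G₁
  have h₀ := hmax ⟨G₀, rfl⟩
  omega

theorem antisymmetric_fword_hd {n : ℕ} (hn : 2 ≤ n) (w : Fin n → α)
    (A M : α) (hAM : A ≠ M) (htwo : ∀ i, w i = A ∨ w i = M)
    (hanti : ∀ i, w i ≠ w i.rev) (d : ℕ) (hd : 1 ≤ d) :
    4 * fword w d = (n + 2) ^ d - (n - 2) ^ d :=
  antisymmetric_fword_hd_general hn w A M htwo hanti d

end WordGridHD
end

section
/- Let w be a word of length n ≥ 2 and let A, M be two distinct letters used in w. Let T = {i : w_i = A and w_{n-i+1} = M} and t = |T|. Then f(w) ≥ 4t. -/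
/-! Put `w` into row `i` and column `i` for `i ∈ T`, and `w` reversed for `i ∈ rev T`. Where two
of these lines cross, both read the letter `A` or `M` that the mirror condition defining `T`
prescribes there, so such a grid exists; since `A ≠ M`, `T` and `rev T` are disjoint, which gives
`2t` rows and `2t` columns containing `w`. -/

namespace WordGrid

variable {α : Type*}

/-- The set `T` of the paper, for the letters `A = a` and `M = b`. -/
def mirrorSet {n : ℕ} (w : Fin n → α) (a b : α) : Set (Fin n) :=
  {i | w i = a ∧ w i.rev = b}

theorem mirrorSet_swap_eq_image {n : ℕ} (w : Fin n → α) (a b : α) :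
    mirrorSet w b a = Fin.rev '' mirrorSet w a b := by
  rw [Fin.rev_involutive.image_eq_preimage_symm]
  ext i
  simp only [mirrorSet, Set.mem_preimage, Set.mem_ofPred_eq, Fin.rev_rev, and_comm]

theorem ncard_mirrorSet_swap {n : ℕ} (w : Fin n → α) (a b : α) :
    (mirrorSet w b a).ncard = (mirrorSet w a b).ncard := by
  rw [mirrorSet_swap_eq_image, Set.ncard_image_of_injective _ Fin.rev_injective]

theorem disjoint_mirrorSet_swap {n : ℕ} (w : Fin n → α) {a b : α} (hab : a ≠ b) :
    Disjoint (mirrorSet w a b) (mirrorSet w b a) :=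
  Set.disjoint_left.2 fun _ hi hi' => hab (hi.1.symm.trans hi'.1)

open Classical in
noncomputable def crossGrid {n : ℕ} (w : Fin n → α) (a b : α) : Fin n → Fin n → α :=
  fun i j =>
    if i ∈ mirrorSet w a b then w j
    else if i ∈ mirrorSet w b a then w j.rev
    else if j ∈ mirrorSet w a b then w i
    else if j ∈ mirrorSet w b a then w i.rev
    else w j

section crossGrid

variable {n : ℕ} {w : Fin n → α} {a b : α}

theorem rowC_crossGrid (hab : a ≠ b) {i : Fin n}
    (hi : i ∈ mirrorSet w a b ∪ mirrorSet w b a) : rowC w (crossGrid w a b) i := by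
  rcases hi with hi | hi
  · exact Or.inl fun j => if_pos hi
  · have hi' : i ∉ mirrorSet w a b := (disjoint_mirrorSet_swap w hab).notMem_of_mem_right hi
    exact Or.inr fun j => by simp only [crossGrid, if_neg hi', if_pos hi]

theorem colC_crossGrid (hab : a ≠ b) {j : Fin n}
    (hj : j ∈ mirrorSet w a b ∪ mirrorSet w b a) : colC w (crossGrid w a b) j := by
  have hdisj := disjoint_mirrorSet_swap w hab
  rcases hj with hj | hj
  · refine Or.inl fun i => ?_
    by_cases hi : i ∈ mirrorSet w a b
    · simp only [crossGrid, if_pos hi, hj.1, hi.1]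
    by_cases hi' : i ∈ mirrorSet w b a
    · simp only [crossGrid, if_neg hi, if_pos hi', hj.2, hi'.1]
    · simp only [crossGrid, if_neg hi, if_neg hi', if_pos hj]
  · refine Or.inr fun i => ?_
    by_cases hi : i ∈ mirrorSet w a b
    · simp only [crossGrid, if_pos hi, hj.1, hi.2]
    by_cases hi' : i ∈ mirrorSet w b a
    · simp only [crossGrid, if_neg hi, if_pos hi', hj.2, hi'.2]
    · simp only [crossGrid, if_neg hi, if_neg hi', if_neg (hdisj.notMem_of_mem_right hj),
        if_pos hj]

theorem four_mul_ncard_mirrorSet_le_count (hab : a ≠ b) :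
    4 * (mirrorSet w a b).ncard ≤ count w (crossGrid w a b) := by
  have hunion : (mirrorSet w a b ∪ mirrorSet w b a).ncard = 2 * (mirrorSet w a b).ncard := by
    rw [Set.ncard_union_eq (disjoint_mirrorSet_swap w hab), ncard_mirrorSet_swap, two_mul]
  have hrows : 2 * (mirrorSet w a b).ncard ≤ {i | rowC w (crossGrid w a b) i}.ncard :=
    hunion ▸ Set.ncard_le_ncard fun _ => rowC_crossGrid hab
  have hcols : 2 * (mirrorSet w a b).ncard ≤ {j | colC w (crossGrid w a b) j}.ncard :=
    hunion ▸ Set.ncard_le_ncard fun _ => colC_crossGrid hab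
  unfold count
  omega

end crossGrid

theorem count_le_two_mul_add_two {n : ℕ} (w : Fin n → α) (G : Fin n → Fin n → α) :
    count w G ≤ 2 * n + 2 := by
  have hrows := Set.ncard_le_card {i | rowC w G i}
  have hcols := Set.ncard_le_card {j | colC w G j}
  rw [Nat.card_fin] at hrows hcols
  unfold count
  split_ifs <;> omega

theorem count_le_fword {n : ℕ} (w : Fin n → α) (G : Fin n → Fin n → α) :
    count w G ≤ fword w :=
  le_csSup ⟨2 * n + 2, by rintro _ ⟨G', rfl⟩; exact count_le_two_mul_add_two w G'⟩ ⟨G, rfl⟩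

theorem fword_four_t_general {n : ℕ} (w : Fin n → α)
    (A M : α) (hAM : A ≠ M) :
    fword w ≥ 4 * {i | w i = A ∧ w i.rev = M}.ncard :=
  (four_mul_ncard_mirrorSet_le_count hAM).trans (count_le_fword w _)

theorem fword_four_t {n : ℕ} (hn : 2 ≤ n) (w : Fin n → α)
    (A M : α) (hAM : A ≠ M) (hA : ∃ i, w i = A) (hM : ∃ i, w i = M) :
    fword w ≥ 4 * {i | w i = A ∧ w i.rev = M}.ncard :=
  fword_four_t_general w A M hAM

end WordGrid
end
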